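/- arXiv:2009.04324 — 8 statements merged into one kernel-verified Lean document; each statement's English description precedes it below -/
import Mathlib

section
/- If the kernel k is twice continuously differentiable and ρ_X has compact support, then the operator on the RKHS H representing the Dirichlet energy satisfies S* 𝓛 S = Σ_{i=1}^d E_{X∼ρ_X}[∂_i k_X ⊗ ∂_i k_X], where ∂_i k_x ∈ H is the derivative evaluation map satisfying ∂_i g_θ(x) = ⟨θ, ∂_i k_x⟩_H. -/
open MeasureTheory RealInnerProductSpace

/-!
Testing the defining property of `∂ᵢk_b` against `θ = ∂ᵢk_a` expresses `⟪∂ᵢk_a, ∂ᵢk_b⟫` as a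
mixed second partial derivative of `k`, which is jointly continuous since `k` is `C²`. Hence
`x ↦ ∂ᵢk_x` is continuous, and all integrands are integrable against the compactly supported
`ρ`. Pointwise `‖∇g_θ(x)‖² = ∑ᵢ (∂ᵢg_θ(x))² = ∑ᵢ ⟪∂ᵢk_x, θ⟫²`; integrating and moving `θ` out of
the Bochner integral gives the quadratic form of `∑ᵢ E[∂ᵢk_X ⊗ ∂ᵢk_X]`.
-/

theorem continuous_of_continuous_inner {X H : Type*} [TopologicalSpace X] [NormedAddCommGroup H]
    [InnerProductSpace ℝ H] {f : X → H} (hf : Continuous fun p : X × X => ⟪f p.1, f p.2⟫) :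
    Continuous f := by
  refine continuous_iff_continuousAt.mpr fun a => tendsto_iff_norm_sub_tendsto_zero.mpr ?_
  have hself : Continuous fun b => ⟪f b, f b⟫ := hf.comp (continuous_id.prodMk continuous_id)
  have hleft : Continuous fun b => ⟪f b, f a⟫ := hf.comp (continuous_id.prodMk continuous_const)
  have hsq : Continuous fun b => ‖f b - f a‖ ^ 2 := by
    simp only [@norm_sub_sq_real H, ← real_inner_self_eq_norm_sq]
    fun_prop
  simpa using (hsq.tendsto a).sqrt

theorem ContDiff.continuous_fderiv_fderiv_apply {E F G : Type*} [NormedAddCommGroup E]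
    [NormedSpace ℝ E] [NormedAddCommGroup F] [NormedSpace ℝ F] [NormedAddCommGroup G]
    [NormedSpace ℝ G] {k : E → F → G} (hk : ContDiff ℝ 2 fun p : E × F => k p.1 p.2)
    (v : E) (w : F) :
    Continuous fun p : F × E => fderiv ℝ (fun y => fderiv ℝ (fun z => k z y) p.2 v) p.1 w := by
  have hpartial : ContDiff ℝ 1 fun p : E × F => fderiv ℝ (fun z => k z p.2) p.1 v :=
    (ContDiff.fderiv (f := fun (p : E × F) z => k z p.2)
      (hk.comp (contDiff_snd.prodMk (contDiff_snd.comp contDiff_fst))) contDiff_fst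
      le_rfl).clm_apply contDiff_const
  have hmixed : ContDiff ℝ 0 fun p : F × E =>
      fderiv ℝ (fun y => fderiv ℝ (fun z => k z y) p.2 v) p.1 :=
    ContDiff.fderiv (f := fun (p : F × E) y => fderiv ℝ (fun z => k z y) p.2 v)
      (hpartial.comp ((contDiff_snd.comp contDiff_fst).prodMk contDiff_snd)) contDiff_fst le_rfl
  exact hmixed.continuous.clm_apply continuous_const

section DirDerivFeature

variable {E H : Type*} [NormedAddCommGroup E] [NormedSpace ℝ E] [NormedAddCommGroup H]
  [InnerProductSpace ℝ H]

/-- `dk x` plays the role of the paper's `∂ᵥk_x`. -/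
def IsDirDerivFeature (kx : E → H) (v : E) (dk : E → H) : Prop :=
  ∀ θ x, ⟪dk x, θ⟫ = fderiv ℝ (fun y => ⟪kx y, θ⟫) x v

variable {k : E → E → ℝ} {kx : E → H} {v : E} {dk : E → H}

theorem IsDirDerivFeature.inner_feature_eq_fderiv_kernel (hdk : IsDirDerivFeature kx v dk)
    (hkx : ∀ x x', k x x' = ⟪kx x, kx x'⟫) (b y : E) :
    ⟪kx y, dk b⟫ = fderiv ℝ (fun z => k z y) b v := by
  rw [real_inner_comm, hdk (kx y) b]
  simp only [hkx]

theorem IsDirDerivFeature.inner_eq_fderiv_fderiv_kernel (hdk : IsDirDerivFeature kx v dk)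
    (hkx : ∀ x x', k x x' = ⟪kx x, kx x'⟫) (a b : E) :
    ⟪dk a, dk b⟫ = fderiv ℝ (fun y => fderiv ℝ (fun z => k z y) b v) a v := by
  simp only [hdk (dk b) a, hdk.inner_feature_eq_fderiv_kernel hkx]

theorem IsDirDerivFeature.continuous (hdk : IsDirDerivFeature kx v dk)
    (hk : ContDiff ℝ 2 fun p : E × E => k p.1 p.2) (hkx : ∀ x x', k x x' = ⟪kx x, kx x'⟫) :
    Continuous dk :=
  continuous_of_continuous_inner <| (hk.continuous_fderiv_fderiv_apply v v).congr fun p =>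
    (hdk.inner_eq_fderiv_fderiv_kernel hkx p.1 p.2).symm

end DirDerivFeature

theorem norm_gradient_sq_eq_sum {ι E : Type*} [Fintype ι] [NormedAddCommGroup E]
    [InnerProductSpace ℝ E] [CompleteSpace E] (b : OrthonormalBasis ι ℝ E) (f : E → ℝ) (x : E) :
    ‖gradient f x‖ ^ 2 = ∑ i, fderiv ℝ f x (b i) ^ 2 := by
  simp only [← b.sum_sq_norm_inner_right, inner_gradient_right, conj_trivial, Real.norm_eq_abs,
    sq_abs]

theorem Continuous.integrable_of_isCompact_of_measure_compl_eq_zero {X E : Type*}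
    [MeasurableSpace X] [TopologicalSpace X] [OpensMeasurableSpace X] [T2Space X]
    [NormedAddCommGroup E] [SecondCountableTopologyEither X E] {μ : Measure X}
    [IsFiniteMeasureOnCompacts μ] {K : Set X} (hK : IsCompact K) (hμK : μ Kᶜ = 0) {f : X → E}
    (hf : Continuous f) : Integrable f μ := by
  rw [← Measure.restrict_eq_self_of_ae_mem (ae_iff.mpr hμK)]
  exact hf.continuousOn.integrableOn_compact hK

theorem inner_integral_inner_smul_self {X H : Type*} [MeasurableSpace X] [NormedAddCommGroup H]
    [InnerProductSpace ℝ H] [CompleteSpace H] {μ : Measure X} {g : X → H} (θ : H)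
    (hg : Integrable (fun x => ⟪g x, θ⟫ • g x) μ) :
    ⟪θ, ∫ x, ⟪g x, θ⟫ • g x ∂μ⟫ = ∫ x, ⟪g x, θ⟫ ^ 2 ∂μ := by
  rw [← integral_inner hg]
  simp only [real_inner_smul_right, real_inner_comm θ, sq]

/-- If the kernel `k` is twice continuously differentiable and `ρ_X` has compact
support, then the operator on the RKHS `H` representing the Dirichlet energy satisfies
`S* 𝓛 S = ∑_{i=1}^d E_{X∼ρ_X}[∂_i k_X ⊗ ∂_i k_X]`, where `∂_i k_x ∈ H` satisfies
`∂_i g_θ(x) = ⟨θ, ∂_i k_x⟩_H`.  We express this as the equality of the quadratic forms: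
for every `θ`, the Dirichlet energy `⟨Sθ, 𝓛 Sθ⟩ = E[‖∇ g_θ(X)‖²]` of `g_θ = Sθ` equals
`⟨θ, (∑_i E[∂_i k_X ⊗ ∂_i k_X]) θ⟩_H` (which determines the self-adjoint operator). -/
theorem dirichlet_energy_operator
    {d : ℕ} {H : Type*} [NormedAddCommGroup H] [InnerProductSpace ℝ H] [CompleteSpace H]
    (k : EuclideanSpace ℝ (Fin d) → EuclideanSpace ℝ (Fin d) → ℝ)
    (hk : ContDiff ℝ 2 fun p : EuclideanSpace ℝ (Fin d) × EuclideanSpace ℝ (Fin d) =>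
      k p.1 p.2)
    (kx : EuclideanSpace ℝ (Fin d) → H) (hkx : ∀ x x', k x x' = ⟪kx x, kx x'⟫)
    (ρ : Measure (EuclideanSpace ℝ (Fin d))) [IsProbabilityMeasure ρ]
    (hρc : ∃ K : Set (EuclideanSpace ℝ (Fin d)), IsCompact K ∧ ρ Kᶜ = 0)
    (dk : Fin d → EuclideanSpace ℝ (Fin d) → H)
    (hdk : ∀ (θ : H) (x : EuclideanSpace ℝ (Fin d)) (i : Fin d),
      ⟪dk i x, θ⟫ =
        fderiv ℝ (fun y => ⟪kx y, θ⟫) x (EuclideanSpace.single i (1 : ℝ))) :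
    ∀ θ : H,
      ∫ x, ‖gradient (fun y => ⟪kx y, θ⟫) x‖ ^ 2 ∂ρ
        = ⟪θ, ∑ i : Fin d, ∫ x, ⟪dk i x, θ⟫ • dk i x ∂ρ⟫ := by
  intro θ
  obtain ⟨K, hK, hρK⟩ := hρc
  have hdk_cont (i : Fin d) : Continuous (dk i) :=
    IsDirDerivFeature.continuous (fun θ x => hdk θ x i) hk hkx
  have hcoord_cont (i : Fin d) : Continuous fun x => ⟪dk i x, θ⟫ :=
    (hdk_cont i).inner continuous_const
  have hint (i : Fin d) : Integrable (fun x => ⟪dk i x, θ⟫ ^ 2) ρ :=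
    ((hcoord_cont i).pow 2).integrable_of_isCompact_of_measure_compl_eq_zero hK hρK
  have hint_smul (i : Fin d) : Integrable (fun x => ⟪dk i x, θ⟫ • dk i x) ρ :=
    ((hcoord_cont i).smul (hdk_cont i)).integrable_of_isCompact_of_measure_compl_eq_zero hK hρK
  calc ∫ x, ‖gradient (fun y => ⟪kx y, θ⟫) x‖ ^ 2 ∂ρ
      = ∫ x, ∑ i, ⟪dk i x, θ⟫ ^ 2 ∂ρ := by
        simp only [norm_gradient_sq_eq_sum (EuclideanSpace.basisFun (Fin d) ℝ),
          EuclideanSpace.basisFun_apply, hdk]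
    _ = ∑ i, ∫ x, ⟪dk i x, θ⟫ ^ 2 ∂ρ := integral_finsetSum _ fun i _ => hint i
    _ = ⟪θ, ∑ i, ∫ x, ⟪dk i x, θ⟫ • dk i x ∂ρ⟫ := by
        simp only [inner_sum, inner_integral_inner_smul_self θ (hint_smul _)]
end

section
/- Let 𝓛 and K⁻¹ be positive self-adjoint operators on a Hilbert space, g_λ = (I + λ𝓛)⁻¹ g_ρ and g_{λ,μ} = (I + λ𝓛 + λμK⁻¹)⁻¹ g_ρ. If g_ρ = Σ_{i=1}^r ⟨g_ρ, e_i⟩ e_i with each eigenvector e_i of 𝓛 satisfying K^{-1/2} e_i ∈ L², then ‖g_{λ,μ} - g_λ‖²_{L²} ≤ λμ c_a² ‖g_ρ‖²_{L²}, where c_a² = Σ_{i=1}^r ‖K^{-1/2} e_i‖²_{L²}. -/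
open RealInnerProductSpace Finset

/-!
Subtracting the two resolvent equations and pairing with `d = g_{λ,μ} - g_λ` gives
`‖d‖² + λ⟪d, 𝓛 d⟫ + λμ⟪d, K⁻¹ (d + g_λ)⟫ = 0`, and positivity of `K⁻¹` at `2d + g_λ` bounds the
cross term, so `‖d‖² ≤ (λμ/4) ⟪g_λ, K⁻¹ g_λ⟫`. On the eigenvectors the resolvent is explicit,
`g_λ = ∑ᵢ ⟪g_ρ, e_i⟫ / (1 + λν_i) • e_i`, a contraction of `g_ρ`; and for any coefficients,
summing `2 a_i a_j ⟪e_i, K⁻¹ e_j⟫ ≤ a_j² ⟪e_i, K⁻¹ e_i⟫ + a_i² ⟪e_j, K⁻¹ e_j⟫` over `i, j` gives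
`⟪∑ a_i e_i, K⁻¹ ∑ a_i e_i⟫ ≤ (∑ a_i²) c_a²`.
-/

section

variable {E : Type*} [NormedAddCommGroup E] [InnerProductSpace ℝ E]

namespace ContinuousLinearMap.IsPositive

variable {T : E →L[ℝ] E} (hT : T.IsPositive)
include hT

theorem two_mul_inner_map_le (x y : E) : 2 * ⟪x, T y⟫ ≤ ⟪x, T x⟫ + ⟪y, T y⟫ := by
  have h := hT.inner_nonneg_right (x - y)
  have hsymm : ⟪y, T x⟫ = ⟪x, T y⟫ := by
    rw [← hT.inner_left_eq_inner_right, real_inner_comm]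
  simp only [map_sub, inner_sub_left, inner_sub_right, hsymm] at h
  linarith

theorem inner_map_sum_smul_le {ι : Type*} (s : Finset ι) (a : ι → ℝ) (v : ι → E) :
    ⟪∑ i ∈ s, a i • v i, T (∑ i ∈ s, a i • v i)⟫
      ≤ (∑ i ∈ s, a i ^ 2) * ∑ i ∈ s, ⟪v i, T (v i)⟫ := by
  have hexpand : ⟪∑ i ∈ s, a i • v i, T (∑ i ∈ s, a i • v i)⟫
      = ∑ i ∈ s, ∑ j ∈ s, a i * a j * ⟪v i, T (v j)⟫ := by
    simp only [map_sum, sum_inner, inner_sum, map_smul, real_inner_smul_left,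
      real_inner_smul_right]
    rw [sum_comm]
    exact sum_congr rfl fun i _ => sum_congr rfl fun j _ => by ring
  have hterm : ∀ i j, 2 * (a i * a j * ⟪v i, T (v j)⟫)
      ≤ a j ^ 2 * ⟪v i, T (v i)⟫ + a i ^ 2 * ⟪v j, T (v j)⟫ := fun i j => by
    have h := hT.two_mul_inner_map_le (a j • v i) (a i • v j)
    simp only [map_smul, real_inner_smul_left, real_inner_smul_right] at h
    linarith
  rw [hexpand, ← mul_le_mul_iff_right₀ (zero_lt_two' ℝ), mul_sum]
  calc ∑ i ∈ s, 2 * ∑ j ∈ s, a i * a j * ⟪v i, T (v j)⟫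
      ≤ ∑ i ∈ s, ∑ j ∈ s, (a j ^ 2 * ⟪v i, T (v i)⟫ + a i ^ 2 * ⟪v j, T (v j)⟫) := by
        gcongr with i _
        rw [mul_sum]
        exact sum_le_sum fun j _ => hterm i j
    _ = 2 * ((∑ i ∈ s, a i ^ 2) * ∑ i ∈ s, ⟪v i, T (v i)⟫) := by
        simp only [sum_add_distrib, ← sum_mul, ← mul_sum]
        ring

end ContinuousLinearMap.IsPositive

section Resolvent

variable {A : E →L[ℝ] E} (hA : ∀ v, 0 ≤ ⟪v, A v⟫) {t : ℝ} (ht : 0 ≤ t)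
include hA ht

theorem norm_le_norm_add_smul_apply (x : E) : ‖x‖ ≤ ‖x + t • A x‖ := by
  have h : ‖x‖ ^ 2 ≤ ‖x‖ * ‖x + t • A x‖ :=
    calc ‖x‖ ^ 2 ≤ ‖x‖ ^ 2 + t * ⟪x, A x⟫ := le_add_of_nonneg_right (mul_nonneg ht (hA x))
      _ = ⟪x, x + t • A x⟫ := by
        rw [inner_add_right, real_inner_smul_right, real_inner_self_eq_norm_sq]
      _ ≤ ‖x‖ * ‖x + t • A x‖ := real_inner_le_norm _ _
  rcases (norm_nonneg x).eq_or_lt with h0 | hpos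
  · rw [← h0]; exact norm_nonneg _
  · nlinarith

theorem eq_of_add_smul_apply_eq {x y : E} (h : x + t • A x = y + t • A y) : x = y := by
  have h0 : (x - y) + t • A (x - y) = 0 := by
    rw [map_sub]
    linear_combination (norm := module) h
  rw [← sub_eq_zero, ← norm_le_zero_iff]
  simpa only [h0, norm_zero] using norm_le_norm_add_smul_apply hA ht (x - y)

theorem norm_sub_sq_le_of_add_smul_apply_eq {B : E →L[ℝ] E} (hB : B.IsPositive) {κ : ℝ}
    (hκ : 0 ≤ κ) {f g w : E} (hg : g + t • A g = f) (hw : w + t • A w + κ • B w = f) :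
    ‖w - g‖ ^ 2 ≤ κ / 4 * ⟪g, B g⟫ := by
  set d := w - g
  have hd : d + t • A d + κ • B (d + g) = 0 := by
    simp only [d, sub_add_cancel, map_sub]
    linear_combination (norm := module) hw - hg
  have hinner : ‖d‖ ^ 2 + t * ⟪d, A d⟫ + κ * (⟪d, B d⟫ + ⟪d, B g⟫) = 0 := by
    have := congrArg (⟪d, ·⟫) hd
    simpa only [inner_add_right, real_inner_smul_right, map_add, inner_zero_right,
      real_inner_self_eq_norm_sq] using this
  have hcross : -(4 * ⟪d, B g⟫) ≤ 4 * ⟪d, B d⟫ + ⟪g, B g⟫ := by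
    have h := hB.two_mul_inner_map_le ((2 : ℝ) • d) (-g)
    simp only [map_smul, map_neg, inner_neg_left, inner_neg_right, neg_neg,
      real_inner_smul_left, real_inner_smul_right] at h
    linarith
  nlinarith [mul_nonneg ht (hA d), mul_le_mul_of_nonneg_left hcross hκ]

end Resolvent

theorem sum_div_smul_add_smul_apply_of_eigen {ι : Type*} {A : E →L[ℝ] E} {s : Finset ι}
    {e : ι → E} {ν : ι → ℝ} (heig : ∀ i ∈ s, A (e i) = ν i • e i) {t : ℝ}
    (hden : ∀ i ∈ s, 1 + t * ν i ≠ 0) (c : ι → ℝ) :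
    ∑ i ∈ s, (c i / (1 + t * ν i)) • e i + t • A (∑ i ∈ s, (c i / (1 + t * ν i)) • e i)
      = ∑ i ∈ s, c i • e i := by
  rw [map_sum, smul_sum, ← sum_add_distrib]
  refine sum_congr rfl fun i hi => ?_
  rw [map_smul, heig i hi, smul_smul, smul_smul, ← add_smul]
  congr 1
  field_simp [hden i hi]

end

theorem tikhonov_mu_bias_bound_general
    {E : Type*} [NormedAddCommGroup E] [InnerProductSpace ℝ E] [CompleteSpace E]
    (A B : E →L[ℝ] E)
    (hApos : ∀ v, 0 ≤ ⟪v, A v⟫)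
    (hB : IsSelfAdjoint B) (hBpos : ∀ v, 0 ≤ ⟪v, B v⟫)
    (e : ℕ → E) (he : Orthonormal ℝ e)
    (ν : ℕ → ℝ) (heig : ∀ i, A (e i) = ν i • e i)
    (r : ℕ) (gρ : E) (hgρ : gρ = ∑ i ∈ range r, ⟪gρ, e i⟫ • e i)
    (lam μ : ℝ) (hlam : 0 < lam) (hμ : 0 < μ)
    (glam glamμ : E)
    (hglam : glam + lam • A glam = gρ)
    (hglamμ : glamμ + lam • A glamμ + (lam * μ) • B glamμ = gρ) :
    ‖glamμ - glam‖ ^ 2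
      ≤ lam * μ * (∑ i ∈ range r, ⟪e i, B (e i)⟫) * ‖gρ‖ ^ 2 := by
  have hBpositive : B.IsPositive :=
    (B.isPositive_iff').2 ⟨hB, fun v => by rw [real_inner_comm]; exact hBpos v⟩
  have hν : ∀ i, 0 ≤ ν i := fun i => by
    simpa [heig, real_inner_smul_right, he.norm_eq_one] using hApos (e i)
  set a := fun i => ⟪gρ, e i⟫ / (1 + lam * ν i)
  have hglam_eq : glam = ∑ i ∈ range r, a i • e i := by
    refine eq_of_add_smul_apply_eq hApos hlam.le (hglam.trans (hgρ.trans ?_))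
    exact (sum_div_smul_add_smul_apply_of_eigen (fun i _ => heig i)
      (fun i _ => by nlinarith [hν i]) _).symm
  have ha : ∑ i ∈ range r, a i ^ 2 ≤ ‖gρ‖ ^ 2 := by
    have hparseval : ∑ i ∈ range r, a i ^ 2 = ‖glam‖ ^ 2 := by
      rw [hglam_eq, ← real_inner_self_eq_norm_sq, he.inner_sum]
      simp [sq]
    rw [hparseval, ← hglam]
    gcongr
    exact norm_le_norm_add_smul_apply hApos hlam.le glam
  have hb : 0 ≤ ∑ i ∈ range r, ⟪e i, B (e i)⟫ := sum_nonneg fun i _ => hBpos (e i)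
  calc ‖glamμ - glam‖ ^ 2 ≤ lam * μ / 4 * ⟪glam, B glam⟫ :=
        norm_sub_sq_le_of_add_smul_apply_eq hApos hlam.le hBpositive (by positivity) hglam hglamμ
    _ ≤ lam * μ / 4 * ((∑ i ∈ range r, a i ^ 2) * ∑ i ∈ range r, ⟪e i, B (e i)⟫) := by
        rw [hglam_eq]
        gcongr
        exact hBpositive.inner_map_sum_smul_le _ _ _
    _ ≤ lam * μ / 4 * (‖gρ‖ ^ 2 * ∑ i ∈ range r, ⟪e i, B (e i)⟫) := by gcongr
    _ ≤ lam * μ * (∑ i ∈ range r, ⟪e i, B (e i)⟫) * ‖gρ‖ ^ 2 := by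
        nlinarith [mul_nonneg (mul_pos hlam hμ).le (mul_nonneg hb (sq_nonneg ‖gρ‖))]

/-- Let `𝓛` (here `A`) and `K⁻¹` (here `B`) be positive self-adjoint operators
on a Hilbert space, `g_λ = (I + λ𝓛)⁻¹ g_ρ` and `g_{λ,μ} = (I + λ𝓛 + λμK⁻¹)⁻¹ g_ρ`
(characterized by the corresponding resolvent equations). If `g_ρ = ∑_{i<r} ⟨g_ρ,e_i⟩ e_i`
where the `e_i` are orthonormal eigenvectors of `𝓛` lying in the range of `K^{1/2}`
(so that `‖K^{-1/2} e_i‖² = ⟨e_i, K⁻¹ e_i⟩` is finite), then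
`‖g_{λ,μ} - g_λ‖² ≤ λμ c_a² ‖g_ρ‖²` with `c_a² = ∑_{i<r} ‖K^{-1/2} e_i‖²
= ∑_{i<r} ⟨e_i, K⁻¹ e_i⟩`. -/
theorem tikhonov_mu_bias_bound
    {E : Type*} [NormedAddCommGroup E] [InnerProductSpace ℝ E] [CompleteSpace E]
    (A B : E →L[ℝ] E)
    (hA : IsSelfAdjoint A) (hApos : ∀ v, 0 ≤ ⟪v, A v⟫)
    (hB : IsSelfAdjoint B) (hBpos : ∀ v, 0 ≤ ⟪v, B v⟫)
    (e : ℕ → E) (he : Orthonormal ℝ e)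
    (ν : ℕ → ℝ) (hν : ∀ i, 0 ≤ ν i) (heig : ∀ i, A (e i) = ν i • e i)
    (r : ℕ) (gρ : E) (hgρ : gρ = ∑ i ∈ range r, ⟪gρ, e i⟫ • e i)
    (lam μ : ℝ) (hlam : 0 < lam) (hμ : 0 < μ)
    (glam glamμ : E)
    (hglam : glam + lam • A glam = gρ)
    (hglamμ : glamμ + lam • A glamμ + (lam * μ) • B glamμ = gρ) :
    ‖glamμ - glam‖ ^ 2
      ≤ lam * μ * (∑ i ∈ range r, ⟪e i, B (e i)⟫) * ‖gρ‖ ^ 2 :=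
  tikhonov_mu_bias_bound_general A B hApos hB hBpos e he ν heig r gρ hgρ lam μ hlam hμ glam glamμ
    hglam hglamμ
end

section
/- Let A ∈ ℝ^{m₁×n}, B ∈ ℝ^{m₂×n} with ker B ⊆ ker A, and let (λ_i, f_i)_{i≤r} be the generalized eigenvalue decomposition of (AᵀA, BᵀB): AᵀA f_i = λ_i BᵀB f_i and f_jᵀ BᵀB f_i = δ_{ij}. Then for λ > 0, the Tikhonov solution x_λ = argmin_x ‖Ax − b‖² + λ‖Bx‖² satisfies A x_λ = Σ_{i=1}^r (λ_i + λ)⁻¹ ⟨A f_i, b⟩ A f_i. -/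
open Matrix Finset


private lemma sum_dot {n r : ℕ} (c : Fin r → ℝ) (f : Fin r → Fin n → ℝ) (z : Fin n → ℝ) :
    (∑ j, c j • f j) ⬝ᵥ z = ∑ j, c j * (f j ⬝ᵥ z) := by
  simp [dotProduct, Finset.sum_apply, Pi.smul_apply, smul_eq_mul, Finset.sum_mul,
    Finset.mul_sum, mul_assoc]
  rw [Finset.sum_comm]
private lemma mulVec_sum' {m n r : ℕ} (A : Matrix (Fin m) (Fin n) ℝ) (c : Fin r → ℝ)
    (f : Fin r → Fin n → ℝ) :
    A *ᵥ (∑ j, c j • f j) = ∑ j, c j • (A *ᵥ f j) := by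
  have h : ∀ v, A *ᵥ v = A.mulVecLin v := fun v => rfl
  simp only [h, map_sum, _root_.map_smul]

private lemma quad_aux' (a c : ℝ) (ha : 0 ≤ a) (h : ∀ t : ℝ, 0 ≤ a * t ^ 2 + c * t) : c = 0 := by
  rcases eq_or_lt_of_le ha with h0 | h0
  · have h1 := h 1
    have h2 := h (-1)
    simp [← h0] at h1 h2
    linarith
  · have h1 := h (-c / (2 * a))
    rw [div_pow, neg_pow] at h1
    have h3 : a * ((-1)^2 * c ^ 2 / (2*a) ^ 2) = c^2 / (4*a) := by field_simp; ring
    have h4 : c * (-c / (2*a)) = -c^2 / (2*a) := by ring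
    rw [h3, h4] at h1
    have h5 : c^2 / (4*a) + -c^2/(2*a) = -c^2/(4*a) := by field_simp; ring
    rw [h5] at h1
    have h7 : 0 ≤ -c^2 := by
      by_contra hcon
      push_neg at hcon
      have : -c^2/(4*a) < 0 := div_neg_of_neg_of_pos hcon (by linarith)
      linarith
    nlinarith [sq_nonneg c]

private lemma expand_aux {m : ℕ} (u p : Fin m → ℝ) (t : ℝ) :
    (u + t • p) ⬝ᵥ (u + t • p) = u ⬝ᵥ u + 2*t*(u ⬝ᵥ p) + t^2*(p ⬝ᵥ p) := by
  simp [dotProduct_add, add_dotProduct, dotProduct_smul, smul_dotProduct, smul_eq_mul,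
    dotProduct_comm p u]
  ring

private lemma transfer_aux {m n : ℕ} (A : Matrix (Fin m) (Fin n) ℝ) (x : Fin n → ℝ)
    (y : Fin m → ℝ) : (A *ᵥ x) ⬝ᵥ y = x ⬝ᵥ (Aᵀ *ᵥ y) := by
  rw [Matrix.dotProduct_mulVec, Matrix.vecMul_transpose, dotProduct_comm]


/-- Let `A ∈ ℝ^{m₁×n}`, `B ∈ ℝ^{m₂×n}` with `ker B ⊆ ker A`, and let
`(λ_i, f_i)_{i<r}` be the generalized eigenvalue decomposition of `(AᵀA, BᵀB)`:
`AᵀA f_i = λ_i BᵀB f_i`, `f_jᵀ BᵀB f_i = δ_{ij}`, together with the completeness property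
(coming from the GSVD of the pair `[A;B]`) that every vector decomposes as an element of
`span{f_i}` plus an element of `ker B`.  Then for `λ > 0`, any Tikhonov solution
`x_λ ∈ argmin_x ‖Ax − b‖² + λ‖Bx‖²` (squared Euclidean norms written via dot products)
satisfies `A x_λ = ∑_{i<r} (λ_i + λ)⁻¹ ⟨A f_i, b⟩ A f_i`. -/
theorem tikhonov_gevd_representation
    {m₁ m₂ n r : ℕ}
    (A : Matrix (Fin m₁) (Fin n) ℝ) (B : Matrix (Fin m₂) (Fin n) ℝ)
    (hker : ∀ v : Fin n → ℝ, B *ᵥ v = 0 → A *ᵥ v = 0)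
    (lam : Fin r → ℝ) (f : Fin r → (Fin n → ℝ))
    (heig : ∀ i, (Aᵀ * A) *ᵥ f i = lam i • ((Bᵀ * B) *ᵥ f i))
    (horth : ∀ i j, f j ⬝ᵥ ((Bᵀ * B) *ᵥ f i) = if i = j then (1 : ℝ) else 0)
    (hcomplete : ∀ v : Fin n → ℝ, ∃ (c : Fin r → ℝ) (w : Fin n → ℝ),
      B *ᵥ w = 0 ∧ v = (∑ i, c i • f i) + w)
    (hlampos : ∀ i, 0 ≤ lam i)
    (b : Fin m₁ → ℝ) (lamreg : ℝ) (hlamreg : 0 < lamreg)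
    (xlam : Fin n → ℝ)
    (hmin : ∀ x : Fin n → ℝ,
      (A *ᵥ xlam - b) ⬝ᵥ (A *ᵥ xlam - b) + lamreg * ((B *ᵥ xlam) ⬝ᵥ (B *ᵥ xlam))
        ≤ (A *ᵥ x - b) ⬝ᵥ (A *ᵥ x - b) + lamreg * ((B *ᵥ x) ⬝ᵥ (B *ᵥ x))) :
    A *ᵥ xlam = ∑ i, ((lam i + lamreg)⁻¹ * ((A *ᵥ f i) ⬝ᵥ b)) • (A *ᵥ f i) := by
  -- gradient condition
  have key : ∀ i, (A *ᵥ xlam - b) ⬝ᵥ (A *ᵥ f i)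
      + lamreg * ((B *ᵥ xlam) ⬝ᵥ (B *ᵥ f i)) = 0 := by
    intro i
    set u := A *ᵥ xlam - b with hu
    set p := A *ᵥ f i with hp
    set v := B *ᵥ xlam with hv
    set q := B *ᵥ f i with hq
    have ha : 0 ≤ p ⬝ᵥ p + lamreg * (q ⬝ᵥ q) := by
      have h1 : 0 ≤ p ⬝ᵥ p := Finset.sum_nonneg fun j _ => mul_self_nonneg _
      have h2 : 0 ≤ q ⬝ᵥ q := Finset.sum_nonneg fun j _ => mul_self_nonneg _
      positivity
    have hc := quad_aux' (p ⬝ᵥ p + lamreg * (q ⬝ᵥ q))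
      (2 * (u ⬝ᵥ p + lamreg * (v ⬝ᵥ q))) ha ?_
    · linarith
    intro t
    have h1 := hmin (xlam + t • f i)
    have e1 : A *ᵥ (xlam + t • f i) - b = u + t • p := by
      rw [mulVec_add, mulVec_smul]; rw [hu, hp]; abel
    have e2 : B *ᵥ (xlam + t • f i) = v + t • q := by
      rw [mulVec_add, mulVec_smul]
    rw [e1, e2, expand_aux, expand_aux] at h1
    nlinarith [h1]
  -- decomposition of xlam
  obtain ⟨c, w, hw, hx⟩ := hcomplete xlam
  have hAw : A *ᵥ w = 0 := hker w hw
  -- A xlam = ∑ c i • A f i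
  have hAx : A *ᵥ xlam = ∑ i, c i • (A *ᵥ f i) := by
    rw [hx, mulVec_add, hAw, add_zero, mulVec_sum']
  -- coefficient of xlam along BᵀB f i is c i
  have hs : ∀ i, xlam ⬝ᵥ ((Bᵀ * B) *ᵥ f i) = c i := by
    intro i
    rw [hx, add_dotProduct]
    have hw0 : w ⬝ᵥ ((Bᵀ * B) *ᵥ f i) = 0 := by
      rw [← mulVec_mulVec, ← transfer_aux B w (B *ᵥ f i), hw, zero_dotProduct]
    rw [hw0, add_zero, sum_dot]
    rw [Finset.sum_eq_single i]
    · rw [horth i i, if_pos rfl, mul_one]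
    · intro j _ hj
      rw [horth i j, if_neg (fun h => hj h.symm), mul_zero]
    · intro h; exact absurd (Finset.mem_univ i) h
  -- from key: (lam i + lamreg) * c i = (A f i) ⬝ b
  have hcval : ∀ i, c i = (lam i + lamreg)⁻¹ * ((A *ᵥ f i) ⬝ᵥ b) := by
    intro i
    have k := key i
    have e3 : (A *ᵥ xlam) ⬝ᵥ (A *ᵥ f i) = lam i * c i := by
      rw [transfer_aux A xlam (A *ᵥ f i), mulVec_mulVec, heig i, dotProduct_smul,
        smul_eq_mul, hs i]
    have e4 : (B *ᵥ xlam) ⬝ᵥ (B *ᵥ f i) = c i := by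
      rw [transfer_aux B xlam (B *ᵥ f i), mulVec_mulVec, hs i]
    rw [sub_dotProduct, e3, e4] at k
    have hpos : lam i + lamreg ≠ 0 := by
      have := hlampos i; positivity
    field_simp
    rw [dotProduct_comm]
    linarith [k]
  rw [hAx]
  exact Finset.sum_congr rfl fun i _ => by rw [hcval i]
end

section
/- Let C, Ĉ be positive self-adjoint bounded operators on a Hilbert space H, P an orthogonal projection, μλ > 0. If ‖(C + λμ)^{-1/2}(Ĉ − C)(C + λμ)^{-1/2}‖_op ≤ t for some t ∈ (0,1), then ‖(C + λμ)^{1/2} P (PĈP + λμ)⁻¹ P (C + λμ)^{1/2}‖_op ≤ (1 − t)⁻¹. -/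
open RealInnerProductSpace

/-- A symmetric operator with `0 ≤ ⟪v, B v⟫ ≤ c * ‖v‖ ^ 2` has norm at most `c`. -/
lemma norm_le_of_symm_nonneg_inner_le
    {E : Type*} [NormedAddCommGroup E] [InnerProductSpace ℝ E]
    (B : E →L[ℝ] E) (hB : ∀ x y, ⟪B x, y⟫ = ⟪x, B y⟫)
    (c : ℝ) (hc : 0 ≤ c)
    (h0 : ∀ v, 0 ≤ ⟪v, B v⟫) (h1 : ∀ v, ⟪v, B v⟫ ≤ c * ‖v‖ ^ 2) :
    ‖B‖ ≤ c := by
  have hCS : ∀ x y, ⟪x, B y⟫ ^ 2 ≤ ⟪x, B x⟫ * ⟪y, B y⟫ := by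
    intro x y
    have hq : ∀ s : ℝ, 0 ≤ ⟪y, B y⟫ * (s * s) + (2 * ⟪x, B y⟫) * s + ⟪x, B x⟫ := by
      intro s
      have h := h0 (x + s • y)
      have hyx : ⟪y, B x⟫ = ⟪x, B y⟫ := by rw [← hB x y, real_inner_comm]
      simp only [map_add, map_smul, inner_add_left, inner_add_right, inner_smul_left,
        inner_smul_right, starRingEnd_apply, star_trivial] at h
      simp only [hyx] at h
      nlinarith [h]
    have hd := discrim_le_zero hq
    rw [discrim] at hd
    nlinarith [hd]
  refine B.opNorm_le_bound hc ?_
  intro v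
  have key : ‖B v‖ ^ 2 * ‖B v‖ ^ 2 ≤ (c * ‖B v‖ ^ 2) * (c * ‖v‖ ^ 2) := by
    have h := hCS (B v) v
    have hBBv := h1 (B v)
    have hBv0 := h0 (B v)
    have hv := h1 v
    have hv0 := h0 v
    have hn : ⟪B v, B v⟫ = ‖B v‖ ^ 2 := real_inner_self_eq_norm_sq _
    nlinarith [mul_le_mul hBBv hv hv0 (by positivity : (0:ℝ) ≤ c * ‖B v‖ ^ 2)]
  have hb := norm_nonneg (B v)
  have hvn := norm_nonneg v
  rcases eq_or_lt_of_le hb with hz | hpos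
  · rw [← hz]; positivity
  · have h2 : ‖B v‖ ^ 2 ≤ (c * ‖v‖) ^ 2 := by nlinarith [key, mul_pos hpos hpos]
    nlinarith [h2, mul_nonneg hc hvn]

/-- Let `C, Ĉ` be positive self-adjoint bounded operators on a Hilbert space,
`P` an orthogonal projection (self-adjoint idempotent), and `λμ > 0`.  Writing `Q` for the
positive square root `(C + λμ)^{1/2}`, `Qi = Q⁻¹ = (C + λμ)^{-1/2}`, and `M` for the inverse
`(PĈP + λμ)⁻¹`, if `‖(C+λμ)^{-1/2}(Ĉ − C)(C+λμ)^{-1/2}‖ ≤ t` for some `t ∈ (0,1)`, then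
`‖(C+λμ)^{1/2} P (PĈP + λμ)⁻¹ P (C+λμ)^{1/2}‖ ≤ (1 − t)⁻¹`. -/
theorem projected_resolvent_bound
    {E : Type*} [NormedAddCommGroup E] [InnerProductSpace ℝ E] [CompleteSpace E]
    (C Chat P : E →L[ℝ] E)
    (hC : IsSelfAdjoint C) (hCpos : ∀ v, 0 ≤ ⟪v, C v⟫)
    (hChat : IsSelfAdjoint Chat) (hChatPos : ∀ v, 0 ≤ ⟪v, Chat v⟫)
    (hP : IsSelfAdjoint P) (hPproj : P.comp P = P)
    (lam μ : ℝ) (hlamμ : 0 < lam * μ)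
    (Q Qi M : E →L[ℝ] E)
    (hQ : IsSelfAdjoint Q) (hQpos : ∀ v, 0 ≤ ⟪v, Q v⟫)
    (hQsq : Q.comp Q = C + (lam * μ) • (1 : E →L[ℝ] E))
    (hQi : Q.comp Qi = 1 ∧ Qi.comp Q = 1)
    (hM : (P.comp (Chat.comp P) + (lam * μ) • (1 : E →L[ℝ] E)).comp M = 1 ∧
          M.comp (P.comp (Chat.comp P) + (lam * μ) • (1 : E →L[ℝ] E)) = 1)
    (t : ℝ) (ht0 : 0 < t) (ht1 : t < 1)
    (hconc : ‖Qi.comp ((Chat - C).comp Qi)‖ ≤ t) :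
    ‖Q.comp (P.comp (M.comp (P.comp Q)))‖ ≤ (1 - t)⁻¹ := by
  set c := lam * μ with hc
  -- symmetry facts
  have hQsymm : ∀ x y, ⟪Q x, y⟫ = ⟪x, Q y⟫ := fun x y =>
    (ContinuousLinearMap.isSelfAdjoint_iff_isSymmetric.mp hQ) x y
  have hPsymm : ∀ x y, ⟪P x, y⟫ = ⟪x, P y⟫ := fun x y =>
    (ContinuousLinearMap.isSelfAdjoint_iff_isSymmetric.mp hP) x y
  have hCsymm : ∀ x y, ⟪C x, y⟫ = ⟪x, C y⟫ := fun x y =>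
    (ContinuousLinearMap.isSelfAdjoint_iff_isSymmetric.mp hC) x y
  have hChatsymm : ∀ x y, ⟪Chat x, y⟫ = ⟪x, Chat y⟫ := fun x y =>
    (ContinuousLinearMap.isSelfAdjoint_iff_isSymmetric.mp hChat) x y
  -- the operator T = P Ĉ P + c and its pointwise action
  set T : E →L[ℝ] E := P.comp (Chat.comp P) + c • (1 : E →L[ℝ] E) with hT
  have hTapp : ∀ u, T u = P (Chat (P u)) + c • u := by
    intro u; simp [hT, ContinuousLinearMap.add_apply, ContinuousLinearMap.comp_apply]
  have hTsymm : ∀ x y, ⟪T x, y⟫ = ⟪x, T y⟫ := by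
    intro x y
    rw [hTapp, hTapp, inner_add_left, inner_add_right, real_inner_smul_left,
      real_inner_smul_right, hPsymm, hChatsymm, hPsymm]
  have hTM : ∀ x, T (M x) = x := by
    intro x
    have := congrArg (fun A : E →L[ℝ] E => A x) hM.1
    simpa [ContinuousLinearMap.comp_apply] using this
  have hMT : ∀ x, M (T x) = x := by
    intro x
    have := congrArg (fun A : E →L[ℝ] E => A x) hM.2
    simpa [ContinuousLinearMap.comp_apply] using this
  have hMsymm : ∀ x y, ⟪M x, y⟫ = ⟪x, M y⟫ := by
    intro x y
    calc ⟪M x, y⟫ = ⟪M x, T (M y)⟫ := by rw [hTM]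
      _ = ⟪T (M x), M y⟫ := (hTsymm _ _).symm
      _ = ⟪x, M y⟫ := by rw [hTM]
  -- Q ∘ Q pointwise
  have hQQ : ∀ x, Q (Q x) = C x + c • x := by
    intro x
    have := congrArg (fun A : E →L[ℝ] E => A x) hQsq
    simpa [ContinuousLinearMap.comp_apply] using this
  have hQnorm : ∀ x, ⟪Q x, Q x⟫ = ⟪x, C x⟫ + c * ⟪x, x⟫ := by
    intro x
    rw [hQsymm, hQQ, inner_add_right, real_inner_smul_right]
  -- perturbation bound: |⟪x, (Ĉ - C) x⟫| ≤ t * ⟪Q x, Q x⟫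
  have hDdecomp : ∀ x, Chat x - C x = Q ((Qi.comp ((Chat - C).comp Qi)) (Q x)) := by
    intro x
    have h1 : Qi (Q x) = x := by
      have := congrArg (fun A : E →L[ℝ] E => A x) hQi.2
      simpa [ContinuousLinearMap.comp_apply] using this
    have h2 : ∀ y, Q (Qi y) = y := by
      intro y
      have := congrArg (fun A : E →L[ℝ] E => A y) hQi.1
      simpa [ContinuousLinearMap.comp_apply] using this
    simp [ContinuousLinearMap.comp_apply, ContinuousLinearMap.sub_apply, h1, h2]
  have hpert : ∀ x, |⟪x, Chat x - C x⟫| ≤ t * ⟪Q x, Q x⟫ := by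
    intro x
    set D := Qi.comp ((Chat - C).comp Qi) with hD
    have h1 : ⟪x, Chat x - C x⟫ = ⟪Q x, D (Q x)⟫ := by
      rw [hDdecomp x, ← hQsymm]
    rw [h1]
    have h2 : |⟪Q x, D (Q x)⟫| ≤ ‖Q x‖ * ‖D (Q x)‖ := abs_real_inner_le_norm _ _
    have h3 : ‖D (Q x)‖ ≤ ‖D‖ * ‖Q x‖ := D.le_opNorm _
    have h4 : ⟪Q x, Q x⟫ = ‖Q x‖ ^ 2 := real_inner_self_eq_norm_sq _
    nlinarith [norm_nonneg (Q x), norm_nonneg D, mul_le_mul_of_nonneg_left h3 (norm_nonneg (Q x)),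
      mul_le_mul_of_nonneg_right hconc (mul_nonneg (norm_nonneg (Q x)) (norm_nonneg (Q x)))]
  -- ‖P u‖ ≤ ‖u‖
  have hPcontr : ∀ u, ⟪P u, P u⟫ ≤ ⟪u, u⟫ := by
    intro u
    have h1 : ⟪P u, P u⟫ = ⟪u, P u⟫ := by
      rw [hPsymm]
      have := congrArg (fun A : E →L[ℝ] E => A u) hPproj
      simp only [ContinuousLinearMap.comp_apply] at this
      rw [this]
    have h2 : ⟪u, P u⟫ ≤ ‖u‖ * ‖P u‖ := real_inner_le_norm _ _
    have h3 : ⟪P u, P u⟫ = ‖P u‖ ^ 2 := real_inner_self_eq_norm_sq _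
    have h4 : ⟪u, u⟫ = ‖u‖ ^ 2 := real_inner_self_eq_norm_sq _
    nlinarith [norm_nonneg u, norm_nonneg (P u), sq_nonneg (‖u‖ - ‖P u‖)]
  -- main lower bound: (1 - t) * ⟪Q (P u), Q (P u)⟫ ≤ ⟪u, T u⟫
  have hlow : ∀ u, (1 - t) * ⟪Q (P u), Q (P u)⟫ ≤ ⟪u, T u⟫ := by
    intro u
    have hTu : ⟪u, T u⟫ = ⟪P u, Chat (P u)⟫ + c * ⟪u, u⟫ := by
      rw [hTapp, inner_add_right, real_inner_smul_right, ← hPsymm]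
    have hsplit : ⟪P u, Chat (P u)⟫ = ⟪P u, C (P u)⟫ + ⟪P u, Chat (P u) - C (P u)⟫ := by
      rw [inner_sub_right]; ring
    have hp := hpert (P u)
    have habs := abs_le.mp hp
    have hqn := hQnorm (P u)
    have hpc := hPcontr u
    have hCp := hCpos (P u)
    rw [hTu, hsplit, hqn]
    nlinarith [habs.1, hpc, hCp, mul_le_mul_of_nonneg_left hpc (le_of_lt hlamμ)]
  -- the operator B
  set B : E →L[ℝ] E := Q.comp (P.comp (M.comp (P.comp Q))) with hB
  have hBapp : ∀ v, B v = Q (P (M (P (Q v)))) := by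
    intro v; simp [hB, ContinuousLinearMap.comp_apply]
  have hBsymm : ∀ x y, ⟪B x, y⟫ = ⟪x, B y⟫ := by
    intro x y
    rw [hBapp, hBapp, hQsymm, hPsymm, hMsymm, hPsymm, hQsymm]
  -- the key pointwise bounds for B
  have hkey : ∀ v, 0 ≤ ⟪v, B v⟫ ∧ ⟪v, B v⟫ ≤ (1 - t)⁻¹ * ‖v‖ ^ 2 := by
    intro v
    set u := M (P (Q v)) with hu
    have hTueq : T u = P (Q v) := hTM _
    have hsval : ⟪v, B v⟫ = ⟪u, T u⟫ := by
      rw [hBapp]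
      calc ⟪v, Q (P u)⟫ = ⟪Q v, P u⟫ := (hQsymm v (P u)).symm
        _ = ⟪P (Q v), u⟫ := by rw [hPsymm]
        _ = ⟪T u, u⟫ := by rw [hTueq]
        _ = ⟪u, T u⟫ := real_inner_comm _ _
    have hlow' := hlow u
    have hr : ⟪Q (P u), Q (P u)⟫ = ‖Q (P u)‖ ^ 2 := real_inner_self_eq_norm_sq _
    have hs_upper : ⟪v, B v⟫ ≤ ‖v‖ * ‖Q (P u)‖ := by
      rw [hBapp]; exact real_inner_le_norm _ _
    have hs0 : 0 ≤ ⟪v, B v⟫ := by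
      rw [hsval]
      have := mul_nonneg (by linarith : (0:ℝ) ≤ 1 - t) (by rw [hr]; positivity :
        (0:ℝ) ≤ ⟪Q (P u), Q (P u)⟫)
      linarith [hlow']
    refine ⟨hs0, ?_⟩
    have h1t : (0:ℝ) < 1 - t := by linarith
    rw [hsval] at hs_upper hs0 ⊢
    rw [hr] at hlow'
    rw [inv_mul_eq_div, le_div_iff₀ h1t]
    nlinarith [hlow', hs_upper, hs0, h1t.le, norm_nonneg v, norm_nonneg (Q (P u)),
      sq_nonneg (‖v‖ - (1 - t) * ‖Q (P u)‖)]
  refine norm_le_of_symm_nonneg_inner_le B hBsymm _ (inv_nonneg.mpr (by linarith)) (fun v => (hkey v).1)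
    (fun v => (hkey v).2)
end

section
/- Let Σ and L be positive self-adjoint bounded operators on a Hilbert space with L ⪯ c_d Σ^a for some a ∈ [0,1] and c_d > 0, and let P be an orthogonal projection. Then for any λ > 0, with C = Σ + λL: ‖(I − P) C^{1/2}‖²_op ≤ ‖(I − P) Σ^{1/2}‖²_op + c_d λ ‖(I − P) Σ^{1/2}‖^{2a}_op. -/
/-!
With `Q = 1 - P` and `C = Σ + λL`, the C⋆-identity gives `‖Q C^{1/2}‖² = ‖Q C Q‖`, and
`Q C Q ≤ Q Σ Q + c_d λ Q Σ^a Q` in the Löwner order. Everything thus reduces to the Jensen-type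
bound `‖Q Σ^a Q‖ ≤ ‖Q Σ Q‖^a` for a projection `Q`. For this, bound the concave function `x ↦ x^a`
by its tangent line at `t > ‖Q Σ Q‖`; compressing the resulting operator inequality by `Q` gives
`‖Q Σ^a Q‖ ≤ t^a`, and one lets `t` decrease to `‖Q Σ Q‖`.
-/

open scoped ComplexOrder

theorem Real.rpow_le_tangent_line {a s x : ℝ} (ha0 : 0 ≤ a) (ha1 : a ≤ 1) (hs : 0 < s)
    (hx : 0 ≤ x) : x ^ a ≤ a * s ^ (a - 1) * x + (1 - a) * s ^ a := by
  have hbern : (x / s) ^ a ≤ 1 + a * (x / s - 1) := by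
    simpa using rpow_one_add_le_one_add_mul_self (s := x / s - 1)
      (by linarith [div_nonneg hx hs.le]) ha0 ha1
  calc x ^ a = s ^ a * (x / s) ^ a := by
        rw [← Real.mul_rpow hs.le (div_nonneg hx hs.le), mul_div_cancel₀ _ hs.ne']
    _ ≤ s ^ a * (1 + a * (x / s - 1)) := by gcongr
    _ = a * (s ^ a / s) * x + (1 - a) * s ^ a := by field_simp; ring
    _ = a * s ^ (a - 1) * x + (1 - a) * s ^ a := by rw [Real.rpow_sub_one hs.ne']

section CStarAlgebra

variable {A : Type*} [CStarAlgebra A] [PartialOrder A] [StarOrderedRing A]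

lemma cfc_rpow_le_tangent_line {s : A} (hs : 0 ≤ s) {a t : ℝ} (ha0 : 0 ≤ a) (ha1 : a ≤ 1)
    (ht : 0 < t) :
    cfc (fun x : ℝ => x ^ a) s ≤ (a * t ^ (a - 1)) • s + ((1 - a) * t ^ a) • (1 : A) := by
  calc cfc (fun x : ℝ => x ^ a) s ≤ cfc (fun x : ℝ => a * t ^ (a - 1) * x + (1 - a) * t ^ a) s :=
        cfc_mono (fun x hx => Real.rpow_le_tangent_line ha0 ha1 ht
          (spectrum_nonneg_of_nonneg hs hx)) (Real.continuous_rpow_const ha0).continuousOn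
    _ = (a * t ^ (a - 1)) • s + ((1 - a) * t ^ a) • (1 : A) := by
        rw [cfc_add .., cfc_const_mul .., cfc_id' .., cfc_const .., Algebra.algebraMap_eq_smul_one]

lemma norm_mul_cfc_sqrt_sq {q t : A} (hq : IsSelfAdjoint q) (ht : 0 ≤ t) :
    ‖q * cfc (fun x : ℝ => x ^ ((1 : ℝ) / 2)) t‖ ^ 2 = ‖q * t * q‖ := by
  rw [← CFC.rpow_eq_cfc_real ht, ← CFC.sqrt_eq_rpow, sq, ← CStarRing.norm_self_mul_star,
    star_mul, (CFC.sqrt_nonneg t).isSelfAdjoint.star_eq, hq.star_eq, mul_assoc,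
    ← mul_assoc (CFC.sqrt t), CFC.sqrt_mul_sqrt_self t ht, mul_assoc]

theorem IsStarProjection.norm_mul_cfc_rpow_mul_le {q s : A} (hq : IsStarProjection q)
    (hs : 0 ≤ s) {a : ℝ} (ha0 : 0 ≤ a) (ha1 : a ≤ 1) :
    ‖q * cfc (fun x : ℝ => x ^ a) s * q‖ ≤ ‖q * s * q‖ ^ a := by
  set m := ‖q * s * q‖
  have hq_sa : IsSelfAdjoint q := hq.isSelfAdjoint
  have hnonneg : 0 ≤ q * cfc (fun x : ℝ => x ^ a) s * q :=
    hq_sa.conjugate_nonneg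
      (cfc_nonneg fun x hx => Real.rpow_nonneg (spectrum_nonneg_of_nonneg hs hx) a)
  have hle : ∀ t > m, ‖q * cfc (fun x : ℝ => x ^ a) s * q‖ ≤ t ^ a := by
    intro t hmt
    have ht : 0 < t := (norm_nonneg _).trans_lt hmt
    set c := a * t ^ (a - 1)
    set d := (1 - a) * t ^ a
    have hc : 0 ≤ c := mul_nonneg ha0 (Real.rpow_nonneg ht.le _)
    have hd : 0 ≤ d := mul_nonneg (by linarith) (Real.rpow_nonneg ht.le _)
    have hconj : q * cfc (fun x : ℝ => x ^ a) s * q ≤ c • (q * s * q) + d • q := by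
      refine (hq_sa.conjugate_le_conjugate (cfc_rpow_le_tangent_line hs ha0 ha1 ht)).trans_eq ?_
      rw [mul_add, add_mul, mul_smul_comm, mul_smul_comm, smul_mul_assoc, smul_mul_assoc,
        mul_one, hq.isIdempotentElem.eq]
    calc ‖q * cfc (fun x : ℝ => x ^ a) s * q‖ ≤ ‖c • (q * s * q) + d • q‖ :=
          CStarAlgebra.norm_le_norm_of_nonneg_of_le hnonneg hconj
      _ ≤ c * m + d * ‖q‖ := by
          refine (norm_add_le _ _).trans_eq ?_
          rw [norm_smul, norm_smul, Real.norm_of_nonneg hc, Real.norm_of_nonneg hd]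
      _ ≤ c * t + d := by
          gcongr
          exact mul_le_of_le_one_right hd (hq.norm_le q)
      _ = t ^ a := by
          rw [mul_assoc, ← Real.rpow_add_one ht.ne', sub_add_cancel]; ring
  exact ge_of_tendsto ((Real.continuous_rpow_const ha0).continuousWithinAt (s := Set.Ioi m))
    (eventually_nhdsWithin_of_forall hle)

theorem IsStarProjection.norm_mul_cfc_sqrt_add_smul_sq_le {q s l : A} (hq : IsStarProjection q)
    (hs : 0 ≤ s) (hl : 0 ≤ l) {a cd lam : ℝ} (ha0 : 0 ≤ a) (ha1 : a ≤ 1) (hcd : 0 ≤ cd)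
    (hlam : 0 ≤ lam) (hls : l ≤ (cd : ℂ) • cfc (fun x : ℝ => x ^ a) s) :
    ‖q * cfc (fun x : ℝ => x ^ ((1 : ℝ) / 2)) (s + (lam : ℂ) • l)‖ ^ 2
      ≤ ‖q * cfc (fun x : ℝ => x ^ ((1 : ℝ) / 2)) s‖ ^ 2
        + cd * lam * ‖q * cfc (fun x : ℝ => x ^ ((1 : ℝ) / 2)) s‖ ^ (2 * a) := by
  have hq_sa : IsSelfAdjoint q := hq.isSelfAdjoint
  have hlam' : (0 : ℂ) ≤ lam := Complex.zero_le_real.mpr hlam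
  have hC : 0 ≤ s + (lam : ℂ) • l := add_nonneg hs (smul_nonneg hlam' hl)
  rw [norm_mul_cfc_sqrt_sq hq_sa hC, Real.rpow_mul (norm_nonneg _), Real.rpow_two,
    norm_mul_cfc_sqrt_sq hq_sa hs]
  set X := q * cfc (fun x : ℝ => x ^ a) s * q
  have hconj : q * (s + (lam : ℂ) • l) * q ≤ q * s * q + (lam : ℂ) • (cd : ℂ) • X := by
    refine (hq_sa.conjugate_le_conjugate
      (add_le_add_right (smul_le_smul_of_nonneg_left hls hlam') s)).trans_eq ?_
    rw [mul_add, add_mul, mul_smul_comm, mul_smul_comm, smul_mul_assoc, smul_mul_assoc]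
  calc ‖q * (s + (lam : ℂ) • l) * q‖ ≤ ‖q * s * q + (lam : ℂ) • (cd : ℂ) • X‖ :=
        CStarAlgebra.norm_le_norm_of_nonneg_of_le (hq_sa.conjugate_nonneg hC) hconj
    _ ≤ ‖q * s * q‖ + cd * lam * ‖X‖ := by
        refine (norm_add_le _ _).trans_eq ?_
        rw [norm_smul, norm_smul, Complex.norm_real, Complex.norm_real,
          Real.norm_of_nonneg hlam, Real.norm_of_nonneg hcd]
        ring
    _ ≤ ‖q * s * q‖ + cd * lam * ‖q * s * q‖ ^ a := by
        gcongr
        exact hq.norm_mul_cfc_rpow_mul_le hs ha0 ha1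

end CStarAlgebra

/-- Let `Σ` (here `Sig`) and `L` be positive self-adjoint bounded operators on
a Hilbert space with `L ⪯ c_d Σ^a` in the Löwner order, for some `a ∈ [0,1]` and `c_d > 0`
(`Σ^a` given by the continuous functional calculus), and let `P` be an orthogonal projection.
Then for any `λ > 0`, with `C = Σ + λL` and square roots given by functional calculus,
`‖(I − P) C^{1/2}‖² ≤ ‖(I − P) Σ^{1/2}‖² + c_d λ ‖(I − P) Σ^{1/2}‖^{2a}`. -/
theorem low_rank_projection_bound
    {E : Type*} [NormedAddCommGroup E] [InnerProductSpace ℂ E] [CompleteSpace E]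
    (Sig L P : E →L[ℂ] E)
    (hSig : Sig.IsPositive) (hL : L.IsPositive)
    (hP : IsSelfAdjoint P) (hPproj : P.comp P = P)
    (a : ℝ) (ha0 : 0 ≤ a) (ha1 : a ≤ 1) (cd : ℝ) (hcd : 0 < cd)
    (hLow : L ≤ (cd : ℂ) • cfc (fun x : ℝ => x ^ a) Sig)
    (lam : ℝ) (hlam : 0 < lam) :
    ‖((1 : E →L[ℂ] E) - P).comp
        (cfc (fun x : ℝ => x ^ ((1 : ℝ)/2)) (Sig + (lam : ℂ) • L))‖ ^ (2 : ℕ)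
      ≤ ‖((1 : E →L[ℂ] E) - P).comp (cfc (fun x : ℝ => x ^ ((1 : ℝ)/2)) Sig)‖ ^ (2 : ℕ)
        + cd * lam *
          ‖((1 : E →L[ℂ] E) - P).comp (cfc (fun x : ℝ => x ^ ((1 : ℝ)/2)) Sig)‖ ^ (2 * a) := by
  have hQ : IsStarProjection (1 - P) := IsStarProjection.one_sub ⟨hPproj, hP⟩
  simpa only [← ContinuousLinearMap.mul_def] using
    hQ.norm_mul_cfc_sqrt_add_smul_sq_le (Sig.nonneg_iff_isPositive.mpr hSig)
      (L.nonneg_iff_isPositive.mpr hL) ha0 ha1 hcd.le hlam.le hLow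
end

section
/- For positive self-adjoint bounded operators A, B on a Hilbert space and s ∈ [0,1], ‖A^s B^s‖_op ≤ ‖A B‖^s_op (Cordes inequality). -/
/-!
Put `f u = ‖a ^ u * b ^ u‖`. For `x = a ^ m * b ^ m` with `m = (s + t) / 2`, the C⋆-identity and
`r(xy) = r(yx)` for the spectral radius give
`f m ^ 2 = ‖star x * x‖ = r(b^m a^(s+t) b^m) = r(a^t b^t · b^s a^s) ≤ f t * f s`,
so `f` is midpoint log-convex. A bounded nonnegative midpoint log-convex `f` on `[0, 1]` with
`f 0 ≤ 1` satisfies `f s ≤ f 1 ^ s`: dividing by `M ^ u` reduces to `f 0, f 1 ≤ 1`, and then the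
supremum `S` of `f` on `[0, 1]` satisfies `S ≤ √S`, because `f u ^ 2` is at most
`f (2u) * f 0` or `f (2u - 1) * f 1`.
-/

open scoped ENNReal
open Set

theorem spectralRadius_mul_comm {𝕜 A : Type*} [NormedField 𝕜] [Ring A] [Algebra 𝕜 A]
    (a b : A) :
    spectralRadius 𝕜 (a * b) = spectralRadius 𝕜 (b * a) := by
  suffices h : ∀ x y : A, spectralRadius 𝕜 (x * y) ≤ spectralRadius 𝕜 (y * x) from
    le_antisymm (h a b) (h b a)
  intro x y
  refine iSup₂_le fun k hk => ?_
  rcases eq_or_ne k 0 with rfl | hk0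
  · simp
  · have hk' : k ∈ spectrum 𝕜 (y * x) \ {0} := by
      rw [← spectrum.nonzero_mul_comm]
      exact ⟨hk, hk0⟩
    exact le_iSup₂ (f := fun k (_ : k ∈ spectrum 𝕜 (y * x)) => (‖k‖₊ : ℝ≥0∞)) k hk'.1

def MidpointLogConvexOn (S : Set ℝ) (f : ℝ → ℝ) : Prop :=
  ∀ u ∈ S, ∀ v ∈ S, f ((u + v) / 2) ^ 2 ≤ f u * f v

namespace MidpointLogConvexOn

variable {f : ℝ → ℝ}

theorem mono {S T : Set ℝ} (hf : MidpointLogConvexOn T f) (hST : S ⊆ T) :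
    MidpointLogConvexOn S f :=
  fun u hu v hv => hf u (hST hu) v (hST hv)

theorem le_one (hf : MidpointLogConvexOn (Icc 0 1) f)
    (hf_nonneg : ∀ u ∈ Icc (0 : ℝ) 1, 0 ≤ f u) (hf_bdd : BddAbove (f '' Icc 0 1))
    (h0 : f 0 ≤ 1) (h1 : f 1 ≤ 1) : ∀ s ∈ Icc (0 : ℝ) 1, f s ≤ 1 := by
  set S := sSup (f '' Icc 0 1)
  have h0mem : (0 : ℝ) ∈ Icc 0 1 := left_mem_Icc.2 zero_le_one
  have h1mem : (1 : ℝ) ∈ Icc 0 1 := right_mem_Icc.2 zero_le_one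
  have hle : ∀ u ∈ Icc (0 : ℝ) 1, f u ≤ S := fun u hu => le_csSup hf_bdd (mem_image_of_mem f hu)
  have hS0 : 0 ≤ S := (hf_nonneg 0 h0mem).trans (hle 0 h0mem)
  have hsq : ∀ u ∈ Icc (0 : ℝ) 1, f u ^ 2 ≤ S := by
    rintro u ⟨hu0, hu1⟩
    rcases le_total (2 * u) 1 with hu | hu
    · calc f u ^ 2 = f ((2 * u + 0) / 2) ^ 2 := by ring_nf
        _ ≤ f (2 * u) * f 0 := hf _ ⟨by linarith, hu⟩ 0 h0mem
        _ ≤ S * 1 := mul_le_mul (hle _ ⟨by linarith, hu⟩) h0 (hf_nonneg 0 h0mem) hS0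
        _ = S := mul_one S
    · calc f u ^ 2 = f ((2 * u - 1 + 1) / 2) ^ 2 := by ring_nf
        _ ≤ f (2 * u - 1) * f 1 := hf _ ⟨by linarith, by linarith⟩ 1 h1mem
        _ ≤ S * 1 := mul_le_mul (hle _ ⟨by linarith, by linarith⟩) h1 (hf_nonneg 1 h1mem) hS0
        _ = S := mul_one S
  have hS_le_sqrt : S ≤ √S :=
    csSup_le ((nonempty_Icc.2 zero_le_one).image f) (forall_mem_image.2 fun u hu =>
      Real.le_sqrt_of_sq_le (hsq u hu))
  have hS1 : S ≤ 1 := by nlinarith [Real.sq_sqrt hS0, Real.sqrt_nonneg S]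
  exact fun s hs => (hle s hs).trans hS1

theorem div_rpow {M : ℝ} (hf : MidpointLogConvexOn (Icc 0 1) f) (hM : 0 < M) :
    MidpointLogConvexOn (Icc 0 1) (fun u => f u / M ^ u) := by
  intro u hu v hv
  have hMmid : (M ^ ((u + v) / 2)) ^ 2 = M ^ u * M ^ v := by
    rw [← Real.rpow_natCast, ← Real.rpow_mul hM.le, ← Real.rpow_add hM]
    ring_nf
  rw [div_pow, hMmid, div_mul_div_comm]
  exact div_le_div_of_nonneg_right (hf u hu v hv) (by positivity)

theorem le_rpow (hf : MidpointLogConvexOn (Icc 0 1) f)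
    (hf_nonneg : ∀ u ∈ Icc (0 : ℝ) 1, 0 ≤ f u) (hf_bdd : BddAbove (f '' Icc 0 1))
    (h0 : f 0 ≤ 1) {M : ℝ} (hM : 0 < M) (h1 : f 1 ≤ M) :
    ∀ s ∈ Icc (0 : ℝ) 1, f s ≤ M ^ s := by
  have hg_bdd : BddAbove ((fun u => f u / M ^ u) '' Icc 0 1) := by
    obtain ⟨C, hC⟩ := hf_bdd
    obtain ⟨D, hD⟩ := isCompact_Icc.bddAbove_image
      ((continuous_const.rpow continuous_id fun _ => Or.inl hM.ne').inv₀
        fun u => (Real.rpow_pos_of_pos hM u).ne').continuousOn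
    refine ⟨C * D, forall_mem_image.2 fun u hu => ?_⟩
    exact mul_le_mul (hC (mem_image_of_mem f hu)) (hD (mem_image_of_mem _ hu))
      (by positivity) ((hf_nonneg u hu).trans (hC (mem_image_of_mem f hu)))
  intro s hs
  have := (hf.div_rpow hM).le_one (fun u hu => div_nonneg (hf_nonneg u hu) (by positivity))
    hg_bdd (by simpa using h0) (by simpa [div_le_one hM] using h1) s hs
  rwa [div_le_one (by positivity)] at this

theorem le_rpow_apply_one (hf : MidpointLogConvexOn (Icc 0 1) f)
    (hf_nonneg : ∀ u ∈ Icc (0 : ℝ) 1, 0 ≤ f u) (hf_bdd : BddAbove (f '' Icc 0 1))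
    (h0 : f 0 ≤ 1) {s : ℝ} (hs : s ∈ Icc (0 : ℝ) 1) :
    f s ≤ f 1 ^ s := by
  rcases (hf_nonneg 1 (right_mem_Icc.2 zero_le_one)).lt_or_eq with h1 | h1
  · exact hf.le_rpow hf_nonneg hf_bdd h0 h1 le_rfl s hs
  rcases hs.1.eq_or_lt with rfl | hs0
  · simpa using h0
  rw [← h1, Real.zero_rpow hs0.ne']
  refine le_of_forall_pos_le_add fun δ hδ => ?_
  calc f s ≤ (δ ^ s⁻¹) ^ s :=
        hf.le_rpow hf_nonneg hf_bdd h0 (by positivity) (by rw [← h1]; positivity) s hs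
    _ = 0 + δ := by rw [Real.rpow_inv_rpow hδ.le hs0.ne', zero_add]

end MidpointLogConvexOn

namespace CFC

variable {A : Type*} [PartialOrder A] [Ring A] [StarRing A] [TopologicalSpace A]
  [StarOrderedRing A] [Algebra ℝ A] [ContinuousFunctionalCalculus ℝ A IsSelfAdjoint]
  [NonnegSpectrumClass ℝ A] {𝕜 : Type*} [NormedField 𝕜] [Algebra 𝕜 A]

theorem rpow_add_of_nonneg (a : A) {x y : ℝ} (hx : 0 ≤ x) (hy : 0 ≤ y) :
    a ^ (x + y) = a ^ x * a ^ y := by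
  simp only [rpow_def]
  rw [← cfc_mul _ _ a (NNReal.continuous_rpow_const hx).continuousOn
    (NNReal.continuous_rpow_const hy).continuousOn]
  exact cfc_congr fun z _ => NNReal.rpow_add_of_nonneg z hx hy

theorem star_rpow (a : A) (y : ℝ) : star (a ^ y) = a ^ y :=
  (IsSelfAdjoint.of_nonneg rpow_nonneg).star_eq

theorem spectralRadius_star_mul_self_rpow_mul_rpow (a b : A) {s t : ℝ} (hs : 0 ≤ s)
    (ht : 0 ≤ t) :
    spectralRadius 𝕜 (star (a ^ ((s + t) / 2) * b ^ ((s + t) / 2)) *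
        (a ^ ((s + t) / 2) * b ^ ((s + t) / 2)))
      = spectralRadius 𝕜 ((a ^ t * b ^ t) * star (a ^ s * b ^ s)) := by
  set m := (s + t) / 2
  have hm : 0 ≤ m := by positivity
  have hmm : m + m = s + t := add_halves (s + t)
  simp only [star_mul, star_rpow]
  calc spectralRadius 𝕜 (b ^ m * a ^ m * (a ^ m * b ^ m))
      = spectralRadius 𝕜 (a ^ m * a ^ m * (b ^ m * b ^ m)) := by
        rw [mul_assoc, spectralRadius_mul_comm]; simp only [mul_assoc]
    _ = spectralRadius 𝕜 (a ^ s * (a ^ t * b ^ t * b ^ s)) := by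
        rw [← rpow_add_of_nonneg a hm hm, ← rpow_add_of_nonneg b hm hm, hmm,
          rpow_add_of_nonneg a hs ht, add_comm s t, rpow_add_of_nonneg b ht hs]
        simp only [mul_assoc]
    _ = spectralRadius 𝕜 (a ^ t * b ^ t * (b ^ s * a ^ s)) := by
        rw [spectralRadius_mul_comm]; simp only [mul_assoc]

end CFC

section CStarAlgebra

variable {A : Type*} [CStarAlgebra A] [PartialOrder A] [StarOrderedRing A]

theorem norm_rpow_le_max_one (a : A) {u : ℝ} (hu0 : 0 ≤ u) (hu1 : u ≤ 1)
    (ha : 0 ≤ a := by cfc_tac) :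
    ‖a ^ u‖ ≤ max 1 ‖a‖ := by
  rcases hu0.eq_or_lt with rfl | hu0
  · rw [CFC.rpow_zero a]
    nontriviality A
    simp
  calc ‖a ^ u‖ = ‖a‖ ^ u := CFC.norm_rpow a hu0
    _ ≤ max 1 ‖a‖ ^ u := Real.rpow_le_rpow (norm_nonneg a) (le_max_right _ _) hu0.le
    _ ≤ max 1 ‖a‖ ^ (1 : ℝ) := Real.rpow_le_rpow_of_exponent_le (le_max_left _ _) hu1
    _ = max 1 ‖a‖ := Real.rpow_one _

theorem midpointLogConvexOn_norm_rpow_mul_rpow (a b : A) :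
    MidpointLogConvexOn (Ici 0) (fun u => ‖a ^ u * b ^ u‖) := by
  intro s hs t ht
  nontriviality A
  set x := a ^ ((s + t) / 2) * b ^ ((s + t) / 2)
  have key : (‖x‖₊ ^ 2 : ℝ≥0∞) ≤ ‖a ^ s * b ^ s‖₊ * ‖a ^ t * b ^ t‖₊ :=
    calc (‖x‖₊ ^ 2 : ℝ≥0∞) = ‖star x * x‖₊ := by
          rw [CStarRing.nnnorm_star_mul_self, sq, ENNReal.coe_mul]
      _ = spectralRadius ℂ (star x * x) :=
        (IsSelfAdjoint.star_mul_self x).spectralRadius_eq_nnnorm.symm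
      _ = spectralRadius ℂ ((a ^ t * b ^ t) * star (a ^ s * b ^ s)) :=
        CFC.spectralRadius_star_mul_self_rpow_mul_rpow a b hs ht
      _ ≤ ‖(a ^ t * b ^ t) * star (a ^ s * b ^ s)‖₊ := spectrum.spectralRadius_le_nnnorm _
      _ ≤ ‖a ^ s * b ^ s‖₊ * ‖a ^ t * b ^ t‖₊ := by
        rw [mul_comm, ← ENNReal.coe_mul, ENNReal.coe_le_coe, ← nnnorm_star (a ^ s * b ^ s)]
        exact nnnorm_mul_le _ _
  exact_mod_cast key

theorem bddAbove_norm_rpow_mul_rpow (a b : A) (ha : 0 ≤ a := by cfc_tac)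
    (hb : 0 ≤ b := by cfc_tac) :
    BddAbove ((fun u : ℝ => ‖a ^ u * b ^ u‖) '' Icc 0 1) :=
  ⟨max 1 ‖a‖ * max 1 ‖b‖, forall_mem_image.2 fun _ hu => (norm_mul_le _ _).trans <|
    mul_le_mul (norm_rpow_le_max_one a hu.1 hu.2) (norm_rpow_le_max_one b hu.1 hu.2)
      (norm_nonneg _) (by positivity)⟩

theorem norm_rpow_mul_rpow_le (a b : A) {s : ℝ} (hs0 : 0 ≤ s) (hs1 : s ≤ 1)
    (ha : 0 ≤ a := by cfc_tac) (hb : 0 ≤ b := by cfc_tac) :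
    ‖a ^ s * b ^ s‖ ≤ ‖a * b‖ ^ s := by
  have h0 : ‖a ^ (0 : ℝ) * b ^ (0 : ℝ)‖ ≤ 1 := by
    nontriviality A
    simp [CFC.rpow_zero a, CFC.rpow_zero b]
  simpa only [CFC.rpow_one a, CFC.rpow_one b] using
    ((midpointLogConvexOn_norm_rpow_mul_rpow a b).mono Icc_subset_Ici_self).le_rpow_apply_one
      (fun _ _ => norm_nonneg _) (bddAbove_norm_rpow_mul_rpow a b) h0 ⟨hs0, hs1⟩

end CStarAlgebra

/-- Cordes inequality: for positive (self-adjoint) bounded operators `A, B` on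
a Hilbert space and `s ∈ [0,1]`, `‖A^s B^s‖ ≤ ‖AB‖^s`, where `A^s` is given by the
continuous functional calculus. -/
theorem cordes_inequality
    {E : Type*} [NormedAddCommGroup E] [InnerProductSpace ℂ E] [CompleteSpace E]
    (A B : E →L[ℂ] E) (hA : A.IsPositive) (hB : B.IsPositive)
    (s : ℝ) (hs0 : 0 ≤ s) (hs1 : s ≤ 1) :
    ‖(cfc (fun x : ℝ => x ^ s) A).comp (cfc (fun x : ℝ => x ^ s) B)‖
      ≤ ‖A.comp B‖ ^ s := by
  rw [← ContinuousLinearMap.nonneg_iff_isPositive] at hA hB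
  rw [← CFC.rpow_eq_cfc_real hA, ← CFC.rpow_eq_cfc_real hB]
  exact norm_rpow_mul_rpow_le A B hs0 hs1
end

section
/- Let (ξ_i)_{i=1}^{n} be independent mean-zero random vectors in a separable Hilbert space, each bounded by M almost surely, with total variance σ² = E[Σᵢ ‖ξᵢ‖²]. Then for any t > 0, P(‖Σ_{i=1}^n ξᵢ‖ ≥ t) ≤ 2 exp(−t² / (2σ² + 2tM/3)). -/
/-!
Pinelis' argument. For fixed `x`, `cosh ‖x + y‖` is bounded by `cosh ‖x‖ (exp ‖y‖ - ‖y‖)` plus a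
linear functional of `y`: writing `‖x + y‖²` as a convex combination of `(‖x‖ ± ‖y‖)²` and using
convexity of `w ↦ cosh √w` gives `cosh ‖x‖ cosh ‖y‖ + c sinh ‖x‖ sinh ‖y‖` with `c` the cosine of
the angle, and `sinh b - b ≥ 0` lets one trade the `c` term for `c ‖y‖ sinh ‖x‖`, which is linear
in `y`. If `Y` is independent of `X` with mean zero the linear term integrates to zero, so adding
`Y` multiplies `E cosh ‖X‖` by at most `E (exp ‖Y‖ - ‖Y‖) ≤ 1 + E ‖Y‖² / (2 (1 - M / 3))`. After
rescaling by `λ` and iterating, `E cosh (λ ‖∑ ξᵢ‖) ≤ exp (λ² σ² / (2 (1 - λ M / 3)))`; Markov's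
inequality with `cosh ≥ exp / 2` and `λ = t / (σ² + t M / 3)` finishes the proof.
-/

open MeasureTheory ProbabilityTheory Real
open scoped InnerProductSpace Nat

namespace Real

theorem exp_le_one_add_add_sq_div {s u : ℝ} (hs : 0 ≤ s) (hsu : s ≤ u) (hu : u < 3) :
    exp s ≤ 1 + s + s ^ 2 / (2 * (1 - u / 3)) := by
  have htail : HasSum (fun n => s ^ (n + 2) / (n + 2)!) (exp s - (1 + s)) := by
    have := (hasSum_nat_add_iff' 2).2 (exp_eq_exp_ℝ ▸ NormedSpace.expSeries_div_hasSum_exp s)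
    simpa [Finset.sum_range_succ] using this
  have hgeom : HasSum (fun n => s ^ 2 / 2 * (u / 3) ^ n) (s ^ 2 / (2 * (1 - u / 3))) := by
    have := (hasSum_geometric_of_lt_one (r := u / 3) (by linarith) (by linarith)).mul_left
      (s ^ 2 / 2)
    rwa [← div_eq_mul_inv, div_div] at this
  have hterm (n : ℕ) : s ^ (n + 2) / (n + 2)! ≤ s ^ 2 / 2 * (u / 3) ^ n := by
    have hfact : (2 * 3 ^ n : ℝ) ≤ (n + 2)! := by
      have : 2! * (2 + 1) ^ n ≤ (2 + n)! := Nat.factorial_mul_pow_le_factorial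
      rw [add_comm n 2]
      exact_mod_cast this
    have hu0 : 0 ≤ u := hs.trans hsu
    calc s ^ (n + 2) / (n + 2)! ≤ s ^ 2 * u ^ n / (2 * 3 ^ n) := by
          rw [pow_add, mul_comm]
          gcongr
      _ = s ^ 2 / 2 * (u / 3) ^ n := by rw [div_pow]; ring
  linarith [hasSum_le hterm htail hgeom]

theorem convexOn_cosh_sqrt : ConvexOn ℝ (Set.Ici 0) fun w => cosh √w := by
  have hseries {w : ℝ} (hw : 0 ≤ w) : HasSum (fun n => w ^ n / (2 * n)!) (cosh √w) := by
    simpa [pow_mul, sq_sqrt hw] using hasSum_cosh √w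
  refine ⟨convex_Ici 0, fun a ha b hb p q hp hq hpq => ?_⟩
  have hab : 0 ≤ p * a + q * b := by simp only [Set.mem_Ici] at ha hb; positivity
  refine hasSum_le (fun n => ?_) (hseries hab)
    (((hseries ha).mul_left p).add ((hseries hb).mul_left q))
  have := (convexOn_pow n).2 ha hb hp hq hpq
  simp only [smul_eq_mul] at this ⊢
  rw [mul_div_assoc', mul_div_assoc', ← add_div]
  gcongr

theorem cosh_mul_cosh_add_le {a b c : ℝ} (ha : 0 ≤ a) (hb : 0 ≤ b) (hc : c ≤ 1) :
    cosh a * cosh b + c * (sinh a * sinh b) ≤ cosh a * (exp b - b) + c * b * sinh a := by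
  have hsinh : 0 ≤ sinh b - b := sub_nonneg.2 (self_le_sinh_iff.2 hb)
  have hca : c * sinh a ≤ cosh a :=
    (mul_le_of_le_one_left (sinh_nonneg_iff.2 ha) hc).trans (sinh_lt_cosh a).le
  have := mul_le_mul_of_nonneg_right hca hsinh
  rw [← cosh_add_sinh b]
  linarith

end Real

theorem norm_sinh_norm_div_norm_smul {E : Type*} [NormedAddCommGroup E] [NormedSpace ℝ E]
    (x : E) : ‖(sinh ‖x‖ / ‖x‖) • x‖ = sinh ‖x‖ := by
  rcases eq_or_ne x 0 with rfl | hx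
  · simp
  rw [norm_smul, norm_div, norm_norm, norm_of_nonneg (sinh_nonneg_iff.2 (norm_nonneg x)),
    div_mul_cancel₀ _ (norm_ne_zero_iff.2 hx)]

section InnerProductSpace

variable {E : Type*} [NormedAddCommGroup E] [InnerProductSpace ℝ E]

theorem cosh_norm_add_le (x y : E) :
    cosh ‖x + y‖ ≤ cosh ‖x‖ * cosh ‖y‖ + ⟪x, y⟫_ℝ / (‖x‖ * ‖y‖) * (sinh ‖x‖ * sinh ‖y‖) := by
  set c := ⟪x, y⟫_ℝ / (‖x‖ * ‖y‖)
  have hc := abs_le.1 (abs_real_inner_div_norm_mul_norm_le_one x y)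
  have hinner : ⟪x, y⟫_ℝ = c * (‖x‖ * ‖y‖) := by
    rcases eq_or_ne (‖x‖ * ‖y‖) 0 with h | h
    · have := abs_real_inner_le_norm x y
      rw [h] at this ⊢
      simpa using this
    · exact (div_mul_cancel₀ _ h).symm
  have hsq : ‖x + y‖ = √((1 + c) / 2 * (‖x‖ + ‖y‖) ^ 2 + (1 - c) / 2 * (‖x‖ - ‖y‖) ^ 2) := by
    rw [← sqrt_sq (norm_nonneg (x + y)), norm_add_sq_real, hinner]
    ring_nf
  have hconv := convexOn_cosh_sqrt.2 (sq_nonneg (‖x‖ + ‖y‖)) (sq_nonneg (‖x‖ - ‖y‖))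
    (by linarith : 0 ≤ (1 + c) / 2) (by linarith : 0 ≤ (1 - c) / 2) (by ring)
  simp only [smul_eq_mul, sqrt_sq_eq_abs, cosh_abs] at hconv
  rw [hsq]
  refine hconv.trans_eq ?_
  rw [cosh_add, cosh_sub]
  ring

theorem cosh_norm_add_le_exp_sub (x y : E) :
    cosh ‖x + y‖ ≤ cosh ‖x‖ * (exp ‖y‖ - ‖y‖) + ⟪(sinh ‖x‖ / ‖x‖) • x, y⟫_ℝ := by
  have hc := (abs_le.1 (abs_real_inner_div_norm_mul_norm_le_one x y)).2
  have hinner : ⟪(sinh ‖x‖ / ‖x‖) • x, y⟫_ℝ = ⟪x, y⟫_ℝ / (‖x‖ * ‖y‖) * ‖y‖ * sinh ‖x‖ := by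
    rw [real_inner_smul_left]
    rcases eq_or_ne x 0 with rfl | hx
    · simp
    rcases eq_or_ne y 0 with rfl | hy
    · simp
    field_simp
  rw [hinner]
  exact (cosh_norm_add_le x y).trans (cosh_mul_cosh_add_le (norm_nonneg x) (norm_nonneg y) hc)

end InnerProductSpace

section Integration

variable {α : Type*} [MeasurableSpace α] {μ : Measure α}

theorem integrable_cosh_of_ae_abs_le [IsFiniteMeasure μ] {f : α → ℝ}
    (hf : AEStronglyMeasurable f μ) {C : ℝ} (hfC : ∀ᵐ a ∂μ, |f a| ≤ C) :
    Integrable (fun a => cosh (f a)) μ :=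
  .of_bound (continuous_cosh.comp_aestronglyMeasurable hf) (cosh C) <| hfC.mono fun a ha => by
    rw [norm_of_nonneg (cosh_pos _).le]
    exact cosh_le_cosh.2 (ha.trans (le_abs_self C))

theorem measureReal_ge_le_two_mul_exp_mul_integral_cosh [IsFiniteMeasure μ] {f : α → ℝ}
    {l t : ℝ} (hl : 0 ≤ l) (ht : 0 ≤ t) (hf : Integrable (fun a => cosh (l * f a)) μ) :
    μ.real {a | t ≤ f a} ≤ 2 * exp (-(l * t)) * ∫ a, cosh (l * f a) ∂μ := by
  have hsub : {a | t ≤ f a} ⊆ {a | cosh (l * t) ≤ cosh (l * f a)} := fun a ha => by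
    have : l * t ≤ l * f a := mul_le_mul_of_nonneg_left ha hl
    exact cosh_le_cosh.2 (by rw [abs_of_nonneg (by positivity)]; exact this.trans (le_abs_self _))
  have hmarkov : cosh (l * t) * μ.real {a | t ≤ f a} ≤ ∫ a, cosh (l * f a) ∂μ :=
    (mul_le_mul_of_nonneg_left (measureReal_mono hsub) (cosh_pos _).le).trans
      (mul_meas_ge_le_integral_of_nonneg (ae_of_all _ fun a => (cosh_pos _).le) hf _)
  have hcosh : exp (l * t) / 2 ≤ cosh (l * t) := by
    rw [cosh_eq]; linarith [exp_pos (-(l * t))]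
  calc μ.real {a | t ≤ f a}
      = 2 * exp (-(l * t)) * (exp (l * t) / 2 * μ.real {a | t ≤ f a}) := by
        rw [exp_neg]; field_simp
    _ ≤ 2 * exp (-(l * t)) * ∫ a, cosh (l * f a) ∂μ := by
        gcongr
        exact (mul_le_mul_of_nonneg_right hcosh measureReal_nonneg).trans hmarkov

theorem integral_exp_sub_le [IsProbabilityMeasure μ] {Z : α → ℝ}
    (hZ : AEStronglyMeasurable Z μ) (hZ0 : 0 ≤ᵐ[μ] Z) {M : ℝ} (hZM : ∀ᵐ a ∂μ, Z a ≤ M)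
    (hM : M < 3) : ∫ a, (exp (Z a) - Z a) ∂μ ≤ 1 + (∫ a, Z a ^ 2 ∂μ) / (2 * (1 - M / 3)) := by
  have hZ2 : Integrable (fun a => Z a ^ 2) μ :=
    .of_bound (hZ.pow 2) (M ^ 2) <| (hZ0.and hZM).mono fun a ⟨h0, ha⟩ => by
      rw [norm_of_nonneg (by positivity)]; gcongr
  calc ∫ a, (exp (Z a) - Z a) ∂μ ≤ ∫ a, (1 + Z a ^ 2 / (2 * (1 - M / 3))) ∂μ :=
        integral_mono_of_nonneg
          (ae_of_all _ fun a => sub_nonneg.2 ((lt_add_one _).le.trans (add_one_le_exp _)))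
          ((integrable_const 1).add (hZ2.div_const _))
          ((hZ0.and hZM).mono fun a ⟨h0, ha⟩ => by
            linarith [exp_le_one_add_add_sq_div h0 ha hM])
    _ = 1 + (∫ a, Z a ^ 2 ∂μ) / (2 * (1 - M / 3)) := by
        rw [integral_add (integrable_const 1) (hZ2.div_const _), integral_div]
        simp

variable {E : Type*} [NormedAddCommGroup E] {ι : Type*} {ξ : ι → α → E} {M : ℝ}

theorem ae_norm_sum_le (hbdd : ∀ i, ∀ᵐ a ∂μ, ‖ξ i a‖ ≤ M) (s : Finset ι) :
    ∀ᵐ a ∂μ, ‖∑ i ∈ s, ξ i a‖ ≤ s.card * M := by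
  filter_upwards [(Filter.eventually_all_finset s).2 fun i _ => hbdd i] with a ha
  calc ‖∑ i ∈ s, ξ i a‖ ≤ ∑ i ∈ s, ‖ξ i a‖ := norm_sum_le _ _
    _ ≤ s.card * M := by simpa using Finset.sum_le_sum ha

theorem ae_sum_eq_zero_of_sum_integral_norm_sq_eq_zero [IsFiniteMeasure μ]
    (hmeas : ∀ i, AEStronglyMeasurable (ξ i) μ) (hbdd : ∀ i, ∀ᵐ a ∂μ, ‖ξ i a‖ ≤ M)
    {s : Finset ι} (hvar : ∑ i ∈ s, ∫ a, ‖ξ i a‖ ^ 2 ∂μ = 0) : ∀ᵐ a ∂μ, ∑ i ∈ s, ξ i a = 0 := by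
  have hzero (i : ι) (hi : i ∈ s) : ∀ᵐ a ∂μ, ξ i a = 0 := by
    have hint : Integrable (fun a => ‖ξ i a‖ ^ 2) μ :=
      .of_bound ((hmeas i).norm.pow 2) (M ^ 2) <| (hbdd i).mono fun a h => by
        rw [norm_of_nonneg (by positivity)]; gcongr
    have hvar_i := (Finset.sum_eq_zero_iff_of_nonneg fun i _ =>
      integral_nonneg fun a => by positivity).1 hvar i hi
    filter_upwards [(integral_eq_zero_iff_of_nonneg (fun a => by positivity) hint).1 hvar_i]
      with a h
    simpa using h
  filter_upwards [(Filter.eventually_all_finset s).2 hzero] with a h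
  exact Finset.sum_eq_zero h

end Integration

section Independence

variable {Ω : Type*} [MeasurableSpace Ω] {P : Measure Ω}
  {E : Type*} [NormedAddCommGroup E] [InnerProductSpace ℝ E] [CompleteSpace E]
  [MeasurableSpace E] [BorelSpace E]

theorem ProbabilityTheory.IndepFun.integral_inner_comp_eq_zero {𝓧 : Type*} [MeasurableSpace 𝓧]
    {X : Ω → 𝓧} {Y : Ω → E} {f : 𝓧 → E} (hXY : IndepFun X Y P) (hX : AEMeasurable X P)
    (hf : Integrable f (P.map X)) (hY : Integrable Y P) (hmean : ∫ ω, Y ω ∂P = 0) :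
    ∫ ω, ⟪f (X ω), Y ω⟫_ℝ ∂P = 0 :=
  (hXY.integral_bilin_comp_comp hX hY.aemeasurable hf (g := id)
    ((integrable_map_measure hY.aestronglyMeasurable.aestronglyMeasurable_id_map
      hY.aemeasurable).2 hY) (innerSL ℝ)).trans (by simp [hmean])

variable [IsProbabilityMeasure P] [SecondCountableTopology E]

theorem integral_cosh_norm_add_le {X Y : Ω → E} (hX : Measurable X) (hY : Measurable Y)
    (hXY : IndepFun X Y P) {C M : ℝ} (hXC : ∀ᵐ ω ∂P, ‖X ω‖ ≤ C) (hYM : ∀ᵐ ω ∂P, ‖Y ω‖ ≤ M)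
    (hM : M < 3) (hmean : ∫ ω, Y ω ∂P = 0) :
    ∫ ω, cosh ‖X ω + Y ω‖ ∂P ≤
      (∫ ω, cosh ‖X ω‖ ∂P) * (1 + (∫ ω, ‖Y ω‖ ^ 2 ∂P) / (2 * (1 - M / 3))) := by
  set w : E → E := fun x => (sinh ‖x‖ / ‖x‖) • x
  have hw : Measurable w := by fun_prop
  have hwX : Integrable (fun ω => w (X ω)) P :=
    .of_bound (hw.comp hX).aestronglyMeasurable (sinh C) <| hXC.mono fun ω h => by
      rw [norm_sinh_norm_div_norm_smul]; exact sinh_le_sinh.2 h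
  have hYint : Integrable Y P := .of_bound hY.aestronglyMeasurable M hYM
  have hcoshX : Integrable (fun ω => cosh ‖X ω‖) P :=
    integrable_cosh_of_ae_abs_le (by fun_prop) (by simpa using hXC)
  have hgY : Integrable (fun ω => exp ‖Y ω‖ - ‖Y ω‖) P := by
    refine .of_bound (by fun_prop) (exp M) (hYM.mono fun ω h => ?_)
    rw [norm_of_nonneg (sub_nonneg.2 ((lt_add_one _).le.trans (add_one_le_exp _)))]
    linarith [exp_le_exp.2 h, norm_nonneg (Y ω)]
  have hcross : Integrable (fun ω => ⟪w (X ω), Y ω⟫_ℝ) P :=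
    (hXY.comp hw measurable_id).integrable_bilin hwX hYint (innerSL ℝ)
  have hprod : Integrable (fun ω => cosh ‖X ω‖ * (exp ‖Y ω‖ - ‖Y ω‖)) P :=
    (hXY.comp (by fun_prop : Measurable fun x : E => cosh ‖x‖)
      (by fun_prop : Measurable fun y : E => exp ‖y‖ - ‖y‖)).integrable_mul hcoshX hgY
  calc ∫ ω, cosh ‖X ω + Y ω‖ ∂P
      ≤ ∫ ω, (cosh ‖X ω‖ * (exp ‖Y ω‖ - ‖Y ω‖) + ⟪w (X ω), Y ω⟫_ℝ) ∂P :=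
        integral_mono_of_nonneg (ae_of_all _ fun ω => (cosh_pos _).le) (hprod.add hcross)
          (ae_of_all _ fun ω => cosh_norm_add_le_exp_sub (X ω) (Y ω))
    _ = (∫ ω, cosh ‖X ω‖ ∂P) * ∫ ω, (exp ‖Y ω‖ - ‖Y ω‖) ∂P := by
        rw [integral_add hprod hcross, hXY.integral_inner_comp_eq_zero hX.aemeasurable
          ((integrable_map_measure hw.aestronglyMeasurable hX.aemeasurable).2 hwX) hYint hmean,
          add_zero]
        exact hXY.integral_fun_comp_mul_comp hX.aemeasurable hY.aemeasurable
          (f := fun x => cosh ‖x‖) (g := fun y => exp ‖y‖ - ‖y‖) (by fun_prop) (by fun_prop)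
    _ ≤ (∫ ω, cosh ‖X ω‖ ∂P) * (1 + (∫ ω, ‖Y ω‖ ^ 2 ∂P) / (2 * (1 - M / 3))) :=
        mul_le_mul_of_nonneg_left
          (integral_exp_sub_le (by fun_prop) (ae_of_all _ fun _ => norm_nonneg _) hYM hM)
          (integral_nonneg fun _ => (cosh_pos _).le)

variable {ι : Type*} {ξ : ι → Ω → E} {M : ℝ}

theorem integral_cosh_norm_sum_le (hmeas : ∀ i, Measurable (ξ i)) (hindep : iIndepFun ξ P)
    (hmean : ∀ i, ∫ ω, ξ i ω ∂P = 0) (hbdd : ∀ i, ∀ᵐ ω ∂P, ‖ξ i ω‖ ≤ M) (hM : M < 3)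
    (s : Finset ι) :
    ∫ ω, cosh ‖∑ i ∈ s, ξ i ω‖ ∂P ≤
      exp ((∑ i ∈ s, ∫ ω, ‖ξ i ω‖ ^ 2 ∂P) / (2 * (1 - M / 3))) := by
  classical
  induction s using Finset.induction_on with
  | empty => simp
  | insert a s ha ih =>
    set v := (∫ ω, ‖ξ a ω‖ ^ 2 ∂P) / (2 * (1 - M / 3))
    have hv : 0 ≤ v := div_nonneg (integral_nonneg fun _ => by positivity) (by linarith)
    calc ∫ ω, cosh ‖∑ i ∈ insert a s, ξ i ω‖ ∂P = ∫ ω, cosh ‖∑ i ∈ s, ξ i ω + ξ a ω‖ ∂P := by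
          simp only [Finset.sum_insert ha, add_comm (ξ a _)]
      _ ≤ (∫ ω, cosh ‖∑ i ∈ s, ξ i ω‖ ∂P) * (1 + v) :=
          integral_cosh_norm_add_le (Finset.measurable_sum s fun i _ => hmeas i) (hmeas a)
            (by simpa only [Finset.sum_fn] using hindep.indepFun_finsetSum_of_notMem hmeas ha)
            (ae_norm_sum_le hbdd s) (hbdd a) hM (hmean a)
      _ ≤ exp ((∑ i ∈ s, ∫ ω, ‖ξ i ω‖ ^ 2 ∂P) / (2 * (1 - M / 3))) * exp v :=
          mul_le_mul ih (by linarith [add_one_le_exp v]) (by linarith) (exp_pos _).le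
      _ = exp ((∑ i ∈ insert a s, ∫ ω, ‖ξ i ω‖ ^ 2 ∂P) / (2 * (1 - M / 3))) := by
          rw [← exp_add, Finset.sum_insert ha, add_div, add_comm]

theorem integral_cosh_mul_norm_sum_le (hmeas : ∀ i, Measurable (ξ i)) (hindep : iIndepFun ξ P)
    (hmean : ∀ i, ∫ ω, ξ i ω ∂P = 0) (hbdd : ∀ i, ∀ᵐ ω ∂P, ‖ξ i ω‖ ≤ M) {l : ℝ} (hl : 0 ≤ l)
    (hlM : l * M < 3) (s : Finset ι) :
    ∫ ω, cosh (l * ‖∑ i ∈ s, ξ i ω‖) ∂P ≤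
      exp (l ^ 2 * (∑ i ∈ s, ∫ ω, ‖ξ i ω‖ ^ 2 ∂P) / (2 * (1 - l * M / 3))) := by
  have := integral_cosh_norm_sum_le (ξ := fun i ω => l • ξ i ω) (fun i => (hmeas i).const_smul l)
    (hindep.comp (fun _ => (l • ·)) fun _ => measurable_const_smul l)
    (fun i => by rw [integral_smul, hmean i, smul_zero])
    (fun i => (hbdd i).mono fun ω h => by
      rw [norm_smul, norm_of_nonneg hl]; exact mul_le_mul_of_nonneg_left h hl) hlM s
  simpa [← Finset.smul_sum, norm_smul, abs_of_nonneg hl, mul_pow, integral_const_mul,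
    Finset.mul_sum] using this

theorem measureReal_norm_sum_ge_le (hmeas : ∀ i, Measurable (ξ i)) (hindep : iIndepFun ξ P)
    (hmean : ∀ i, ∫ ω, ξ i ω ∂P = 0) (hbdd : ∀ i, ∀ᵐ ω ∂P, ‖ξ i ω‖ ≤ M) {l t : ℝ} (hl : 0 ≤ l)
    (hlM : l * M < 3) (ht : 0 ≤ t) (s : Finset ι) :
    P.real {ω | t ≤ ‖∑ i ∈ s, ξ i ω‖} ≤
      2 * exp (-(l * t) + l ^ 2 * (∑ i ∈ s, ∫ ω, ‖ξ i ω‖ ^ 2 ∂P) / (2 * (1 - l * M / 3))) := by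
  have hcosh : Integrable (fun ω => cosh (l * ‖∑ i ∈ s, ξ i ω‖)) P :=
    integrable_cosh_of_ae_abs_le (by fun_prop) (C := l * (s.card * M)) <|
      (ae_norm_sum_le hbdd s).mono fun ω h => by
        rw [abs_of_nonneg (by positivity)]; exact mul_le_mul_of_nonneg_left h hl
  calc P.real {ω | t ≤ ‖∑ i ∈ s, ξ i ω‖}
      ≤ 2 * exp (-(l * t)) * ∫ ω, cosh (l * ‖∑ i ∈ s, ξ i ω‖) ∂P :=
        measureReal_ge_le_two_mul_exp_mul_integral_cosh hl ht hcosh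
    _ ≤ 2 * exp (-(l * t)) *
          exp (l ^ 2 * (∑ i ∈ s, ∫ ω, ‖ξ i ω‖ ^ 2 ∂P) / (2 * (1 - l * M / 3))) := by
        gcongr
        exact integral_cosh_mul_norm_sum_le hmeas hindep hmean hbdd hl hlM s
    _ = _ := by rw [mul_assoc, ← exp_add]

end Independence

/-- Bernstein/Yurinskii concentration in Hilbert spaces: Let `(ξ_i)_{i<n}` be
independent mean-zero random vectors in a separable Hilbert space, each bounded by `M`
almost surely, with total variance `σ² = E[∑_i ‖ξ_i‖²]`.  Then for any `t > 0`,
`P(‖∑ ξ_i‖ ≥ t) ≤ 2 exp(−t² / (2σ² + 2tM/3))`. -/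
theorem bernstein_hilbert_concentration
    {Ω : Type*} [MeasurableSpace Ω] (P : Measure Ω) [IsProbabilityMeasure P]
    {E : Type*} [NormedAddCommGroup E] [InnerProductSpace ℝ E] [CompleteSpace E]
    [TopologicalSpace.SeparableSpace E] [MeasurableSpace E] [BorelSpace E]
    {n : ℕ} (ξ : Fin n → Ω → E)
    (hmeas : ∀ i, Measurable (ξ i))
    (hindep : iIndepFun ξ P)
    (hmean : ∀ i, ∫ ω, ξ i ω ∂P = 0)
    (M : ℝ) (hbdd : ∀ i, ∀ᵐ ω ∂P, ‖ξ i ω‖ ≤ M)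
    (σ2 : ℝ) (hσ2 : σ2 = ∑ i, ∫ ω, ‖ξ i ω‖ ^ 2 ∂P) :
    ∀ t > (0 : ℝ),
      (P {ω | t ≤ ‖∑ i, ξ i ω‖}).toReal
        ≤ 2 * Real.exp (-(t ^ 2) / (2 * σ2 + 2 * t * M / 3)) := by
  intro t ht
  have hσ2_nonneg : 0 ≤ σ2 :=
    hσ2 ▸ Finset.sum_nonneg fun i _ => integral_nonneg fun _ => by positivity
  rcases hσ2_nonneg.eq_or_lt with hσ2_zero | hσ2_pos
  · have hsum := ae_sum_eq_zero_of_sum_integral_norm_sq_eq_zero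
      (fun i => (hmeas i).aestronglyMeasurable) hbdd (hσ2 ▸ hσ2_zero.symm)
    rw [measure_eq_zero_iff_ae_notMem.2 (hsum.mono fun ω h => by simp [h, ht])]
    positivity
  have hM : 0 ≤ M := by
    obtain ⟨i, -, -⟩ := Finset.exists_ne_zero_of_sum_ne_zero (hσ2 ▸ hσ2_pos.ne')
    exact (norm_nonneg _).trans (hbdd i).exists.choose_spec
  set l := t / (σ2 + t * M / 3) with hl_def
  have hD : 0 < σ2 + t * M / 3 := by positivity
  have hgap : 1 - l * M / 3 = σ2 / (σ2 + t * M / 3) := by rw [hl_def]; field_simp; ring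
  have hgap_pos : 0 < 1 - l * M / 3 := hgap ▸ div_pos hσ2_pos hD
  calc (P {ω | t ≤ ‖∑ i, ξ i ω‖}).toReal
      ≤ 2 * exp (-(l * t) + l ^ 2 * σ2 / (2 * (1 - l * M / 3))) :=
        hσ2 ▸ measureReal_norm_sum_ge_le hmeas hindep hmean hbdd (by positivity)
          (by linarith) ht.le _
    _ = 2 * exp (-(t ^ 2) / (2 * σ2 + 2 * t * M / 3)) := by
        rw [hgap, hl_def]
        congr 2
        field_simp
        ring
end

section
/- Let C, Ĉ ⪰ 0 be bounded self-adjoint operators on a Hilbert space H, P an orthogonal projection, λμ > 0, and θ_ρ ∈ H. If ‖(C+λμ)^{-1/2}(Ĉ − C)(C+λμ)^{-1/2}‖_op ≤ 1/2, then ‖Σ^{1/2}(P(PĈP + λμ)⁻¹P − (C + λμ)⁻¹)θ_ρ‖ ≤ 3‖C^{1/2}(I − P)‖_op ‖C⁻¹θ_ρ‖ + 2‖(C + λμ)^{-1/2}(Ĉ − C)(C + λμ)⁻¹ θ_ρ‖, where Σ ⪯ C is positive self-adjoint, assuming θ_ρ ∈ range(C). -/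
open RealInnerProductSpace



private lemma aux_comm {R : Type*} [Monoid R] {X B N : R} (hBN : B * N = 1) (hNB : N * B = 1)
    (hX : X * B = B * X) : X * N = N * X := by
  have h := congrArg (fun Y => N * Y * N) hX
  simp only [← mul_assoc] at h
  rw [mul_assoc (N*X) B N, hBN, mul_one, hNB, one_mul] at h
  exact h.symm

private lemma aux_sqle {a b : ℝ} (hb : 0 ≤ b) (h : a^2 ≤ b^2) : a ≤ b := by
  nlinarith [sq_nonneg (a - b), sq_nonneg (a + b)]

private lemma aux_div {a c : ℝ} (ha : 0 ≤ a) (hc : 0 ≤ c) (h : a^2 ≤ c * a) : a ≤ c := by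
  nlinarith

private lemma aux_cs {E : Type*} [NormedAddCommGroup E] [InnerProductSpace ℝ E] [CompleteSpace E]
    (T : E →L[ℝ] E) (hT : IsSelfAdjoint T) (hTpos : ∀ v, 0 ≤ ⟪v, T v⟫) (a b : E) :
    ⟪a, T b⟫^2 ≤ ⟪a, T a⟫ * ⟪b, T b⟫ := by
  have hsymm : ⟪b, T a⟫ = ⟪a, T b⟫ := by
    rw [real_inner_comm]; exact hT.isSymmetric a b
  have key : ∀ t : ℝ, 0 ≤ ⟪b, T b⟫ * (t * t) + (2 * ⟪a, T b⟫) * t + ⟪a, T a⟫ := by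
    intro t
    have h0 := hTpos (a + t • b)
    have expand : ⟪a + t • b, T (a + t • b)⟫
        = ⟪a, T a⟫ + 2 * t * ⟪a, T b⟫ + (t * t) * ⟪b, T b⟫ := by
      rw [map_add, map_smul, inner_add_left, inner_add_right, inner_add_right,
        real_inner_smul_left, real_inner_smul_right, real_inner_smul_left,
        real_inner_smul_right, hsymm]
      ring
    rw [expand] at h0
    linarith
  have := discrim_le_zero key
  rw [discrim] at this
  nlinarith [this]


set_option maxHeartbeats 4000000 in
/-- basis term: Let `Σ` (`Sig`), `C`, `Ĉ` (`Chat`) be positive self-adjoint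
bounded operators on a Hilbert space with `Σ ⪯ C` (Löwner order), `P` an orthogonal
projection, `λμ > 0` and `θ_ρ ∈ range C` (say `C w = θ_ρ`).  With `Q = (C+λμ)^{1/2}`,
`Qi = (C+λμ)^{-1/2}`, `N = (C+λμ)⁻¹`, `M = (PĈP+λμ)⁻¹`, `Σ^{1/2}`, `C^{1/2}` the positive
square roots, if `‖(C+λμ)^{-1/2}(Ĉ − C)(C+λμ)^{-1/2}‖ ≤ 1/2` then
`‖Σ^{1/2}(P(PĈP+λμ)⁻¹P θ_ρ − (C+λμ)⁻¹θ_ρ)‖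
  ≤ 3‖C^{1/2}(I−P)‖ ‖C⁻¹θ_ρ‖ + 2‖(C+λμ)^{-1/2}(Ĉ−C)(C+λμ)⁻¹θ_ρ‖`. -/
theorem basis_term_bound
    {E : Type*} [NormedAddCommGroup E] [InnerProductSpace ℝ E] [CompleteSpace E]
    (Sig C Chat P : E →L[ℝ] E)
    (hSig : IsSelfAdjoint Sig) (hSigPos : ∀ v, 0 ≤ ⟪v, Sig v⟫)
    (hC : IsSelfAdjoint C) (hCpos : ∀ v, 0 ≤ ⟪v, C v⟫)
    (hChat : IsSelfAdjoint Chat) (hChatPos : ∀ v, 0 ≤ ⟪v, Chat v⟫)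
    (hSigC : ∀ v, ⟪v, Sig v⟫ ≤ ⟪v, C v⟫)
    (hP : IsSelfAdjoint P) (hPproj : P.comp P = P)
    (lam μ : ℝ) (hlamμ : 0 < lam * μ)
    (Q Qi Shalf Chalf M N : E →L[ℝ] E)
    (hQ : IsSelfAdjoint Q) (hQpos : ∀ v, 0 ≤ ⟪v, Q v⟫)
    (hQsq : Q.comp Q = C + (lam * μ) • (1 : E →L[ℝ] E))
    (hQi : Q.comp Qi = 1 ∧ Qi.comp Q = 1)
    (hShalf : IsSelfAdjoint Shalf) (hShalfPos : ∀ v, 0 ≤ ⟪v, Shalf v⟫)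
    (hShalfSq : Shalf.comp Shalf = Sig)
    (hChalf : IsSelfAdjoint Chalf) (hChalfPos : ∀ v, 0 ≤ ⟪v, Chalf v⟫)
    (hChalfSq : Chalf.comp Chalf = C)
    (hM : (P.comp (Chat.comp P) + (lam * μ) • (1 : E →L[ℝ] E)).comp M = 1 ∧
          M.comp (P.comp (Chat.comp P) + (lam * μ) • (1 : E →L[ℝ] E)) = 1)
    (hN : (C + (lam * μ) • (1 : E →L[ℝ] E)).comp N = 1 ∧
          N.comp (C + (lam * μ) • (1 : E →L[ℝ] E)) = 1)
    (θρ w : E) (hw : C w = θρ)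
    (hconc : ‖Qi.comp ((Chat - C).comp Qi)‖ ≤ 1 / 2) :
    ‖Shalf (P (M (P θρ)) - N θρ)‖
      ≤ 3 * ‖Chalf.comp ((1 : E →L[ℝ] E) - P)‖ * ‖w‖
        + 2 * ‖Qi ((Chat - C) (N θρ))‖ := by
  have sy : ∀ (T : E →L[ℝ] E), IsSelfAdjoint T → ∀ x y : E, ⟪T x, y⟫ = ⟪x, T y⟫ :=
    fun T hT x y => hT.isSymmetric x y
  set L : ℝ := lam * μ with hLdef
  set J : E →L[ℝ] E := (1 : E →L[ℝ] E) - P with hJdef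
  set B : E →L[ℝ] E := C + L • (1 : E →L[ℝ] E) with hBdef
  set A : E →L[ℝ] E := P.comp (Chat.comp P) + L • (1 : E →L[ℝ] E) with hAdef
  have hBN : B * N = 1 := hN.1
  have hNB : N * B = 1 := hN.2
  have hAM : A * M = 1 := hM.1
  have hMA : M * A = 1 := hM.2
  have hQQi : Q * Qi = 1 := hQi.1
  have hQiQ : Qi * Q = 1 := hQi.2
  have hQQ : Q * Q = B := hQsq
  have hCC : Chalf * Chalf = C := hChalfSq
  have hPP : P * P = P := hPproj
  have hAmul : A = P * (Chat * P) + L • 1 := rfl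
  have hBapp : ∀ t : E, B t = C t + L • t := fun t => rfl
  have hAapp : ∀ z : E, A z = P (Chat (P z)) + L • z := fun z => rfl
  clear_value L J B A
  -- commutations
  have hCB : C * B = B * C := by
    rw [hBdef]; simp [mul_add, add_mul, Algebra.mul_smul_comm, Algebra.smul_mul_assoc]
  have hChalfC : Chalf * C = C * Chalf := by
    rw [← hCC, mul_assoc]
  have hChalfB : Chalf * B = B * Chalf := by
    rw [hBdef]
    simp [mul_add, add_mul, Algebra.mul_smul_comm, Algebra.smul_mul_assoc, hChalfC]
  have hNC : C * N = N * C := aux_comm hBN hNB hCB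
  have hChalfN : Chalf * N = N * Chalf := aux_comm hBN hNB hChalfB
  -- P commutes with A and M
  have e1 : P * (P * (Chat * P)) = P * (Chat * P) := by rw [← mul_assoc, hPP]
  have e2 : (P * (Chat * P)) * P = P * (Chat * P) := by rw [mul_assoc, mul_assoc, hPP]
  have hPA : P * A = A * P := by
    rw [hAmul, mul_add, add_mul, e1, e2, Algebra.mul_smul_comm, Algebra.smul_mul_assoc, mul_one, one_mul]
  have hPM : P * M = M * P := by
    calc P * M = (M * A) * (P * M) := by rw [hMA, one_mul]
      _ = M * ((A * P) * M) := by rw [mul_assoc, ← mul_assoc A P M]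
      _ = M * ((P * A) * M) := by rw [hPA]
      _ = M * (P * (A * M)) := by rw [mul_assoc P A M]
      _ = M * P := by rw [hAM, mul_one]
  have hPJ : P * J = 0 := by rw [hJdef, mul_sub, mul_one, hPP, sub_self]
  have hAJ : A * J = L • J := by
    rw [hAmul, add_mul, Algebra.smul_mul_assoc, one_mul, mul_assoc, mul_assoc, hPJ, mul_zero,
      mul_zero, zero_add]
  -- key operator identity
  have expand : P * (C - Chat) + P * (Chat * J) - L • J = P * B - A := by
    simp only [hJdef, hBdef, hAmul, mul_sub, sub_mul, mul_add, add_mul, mul_one, one_mul,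
      smul_sub, smul_add, Algebra.mul_smul_comm, Algebra.smul_mul_assoc]
    abel
  have keyid : M * P - N = M * ((P * (C - Chat)) * N) + M * ((P * (Chat * J)) * N) - J * N := by
    have h1 : J * N = M * ((L • J) * N) := by
      calc J * N = (M * A) * (J * N) := by rw [hMA, one_mul]
        _ = M * ((A * J) * N) := by rw [mul_assoc, ← mul_assoc A J N]
        _ = M * ((L • J) * N) := by rw [hAJ]
    rw [h1, ← mul_add M, ← mul_sub M, ← add_mul, ← sub_mul, expand, sub_mul, mul_sub,
      mul_assoc P B N, hBN, mul_one, ← mul_assoc M A N, hMA, one_mul]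
  -- vector identity
  have hPMP : ∀ x : E, P (M (P x)) = M (P x) := by
    intro x
    have h := congrArg (fun T : E →L[ℝ] E => T (P x)) hPM
    simp only [ContinuousLinearMap.mul_apply] at h
    rw [h]
    congr 1
    rw [← ContinuousLinearMap.mul_apply, hPP]
  have hvec : M (P θρ) - N θρ
      = M (P ((C - Chat) (N θρ))) + M (P (Chat (J (N θρ)))) - J (N θρ) := by
    have h := congrArg (fun T : E →L[ℝ] E => T θρ) keyid
    simpa only [ContinuousLinearMap.mul_apply, ContinuousLinearMap.sub_apply,
      ContinuousLinearMap.add_apply] using h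
  
  -- pointwise facts
  have hSS : Shalf * Shalf = Sig := hShalfSq
  have hQn : ∀ v : E, ⟪v, B v⟫ = ‖Q v‖^2 := by
    intro v
    have h1 : B v = Q (Q v) := by
      have := congrArg (fun T : E →L[ℝ] E => T v) hQQ
      simpa only [ContinuousLinearMap.mul_apply] using this.symm
    rw [h1, ← sy Q hQ v (Q v)]
    exact real_inner_self_eq_norm_sq _
  have hCn : ∀ v : E, ⟪v, C v⟫ = ‖Chalf v‖^2 := by
    intro v
    have h1 : C v = Chalf (Chalf v) := by
      have := congrArg (fun T : E →L[ℝ] E => T v) hCC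
      simpa only [ContinuousLinearMap.mul_apply] using this.symm
    rw [h1, ← sy Chalf hChalf v (Chalf v)]
    exact real_inner_self_eq_norm_sq _
  have hSn : ∀ v : E, ⟪v, Sig v⟫ = ‖Shalf v‖^2 := by
    intro v
    have h1 : Sig v = Shalf (Shalf v) := by
      have := congrArg (fun T : E →L[ℝ] E => T v) hSS
      simpa only [ContinuousLinearMap.mul_apply] using this.symm
    rw [h1, ← sy Shalf hShalf v (Shalf v)]
    exact real_inner_self_eq_norm_sq _
  have hBv : ∀ v : E, ⟪v, B v⟫ = ⟪v, C v⟫ + L * ‖v‖^2 := by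
    intro v
    rw [hBapp v, inner_add_right, real_inner_smul_right, real_inner_self_eq_norm_sq]
  have hDfact : ∀ v : E, (Chat - C) v = Q ((Qi.comp ((Chat - C).comp Qi)) (Q v)) := by
    intro v
    have hop : Q * (Qi * ((Chat - C) * Qi)) * Q = Chat - C := by
      rw [← mul_assoc Q Qi ((Chat - C) * Qi), hQQi, one_mul, mul_assoc, hQiQ, mul_one]
    have h := congrArg (fun T : E →L[ℝ] E => T v) hop
    simp only [ContinuousLinearMap.mul_apply] at h
    exact h.symm
  have hDbound : ∀ v : E, |⟪v, (Chat - C) v⟫| ≤ 1/2 * ‖Q v‖^2 := by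
    intro v
    rw [hDfact v, ← sy Q hQ v ((Qi.comp ((Chat - C).comp Qi)) (Q v))]
    calc |⟪Q v, (Qi.comp ((Chat - C).comp Qi)) (Q v)⟫|
        ≤ ‖Q v‖ * ‖(Qi.comp ((Chat - C).comp Qi)) (Q v)‖ := abs_real_inner_le_norm _ _
      _ ≤ ‖Q v‖ * (‖Qi.comp ((Chat - C).comp Qi)‖ * ‖Q v‖) :=
          mul_le_mul_of_nonneg_left (ContinuousLinearMap.le_opNorm _ _) (norm_nonneg _)
      _ ≤ ‖Q v‖ * (1/2 * ‖Q v‖) :=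
          mul_le_mul_of_nonneg_left
            (mul_le_mul_of_nonneg_right hconc (norm_nonneg _)) (norm_nonneg _)
      _ = 1/2 * ‖Q v‖^2 := by ring
  have hB2 : ∀ v : E, ⟪v, B v⟫ ≤ 2 * (⟪v, Chat v⟫ + L * ‖v‖^2) := by
    intro v
    have h1 := (abs_le.mp (hDbound v)).1
    have h2 : ⟪v, (Chat - C) v⟫ = ⟪v, Chat v⟫ - ⟪v, C v⟫ := by
      rw [ContinuousLinearMap.sub_apply, inner_sub_right]
    have h3 := hBv v
    have h4 := hQn v
    linarith
  -- properties of y = M (P x)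
  have hAMP : ∀ x : E, A (M (P x)) = P x := by
    intro x
    have h := congrArg (fun T : E →L[ℝ] E => T (P x)) hAM
    simpa only [ContinuousLinearMap.mul_apply, ContinuousLinearMap.one_apply] using h
  have hPinner : ∀ x z : E, ⟪M (P x), P z⟫ = ⟪M (P x), z⟫ := by
    intro x z
    rw [← sy P hP (M (P x)) z, hPMP x]
  have hyChat : ∀ x : E, ⟪M (P x), P x⟫ = ⟪M (P x), Chat (M (P x))⟫ + L * ‖M (P x)‖^2 := by
    intro x
    have h1 : A (M (P x)) = P (Chat (P (M (P x)))) + L • (M (P x)) := hAapp _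
    calc ⟪M (P x), P x⟫ = ⟪M (P x), A (M (P x))⟫ := by rw [hAMP x]
      _ = ⟪M (P x), P (Chat (P (M (P x))))⟫ + L * ‖M (P x)‖^2 := by
          rw [h1, inner_add_right, real_inner_smul_right, real_inner_self_eq_norm_sq]
      _ = ⟪M (P x), Chat (M (P x))⟫ + L * ‖M (P x)‖^2 := by
          rw [hPMP x, hPinner x (Chat (M (P x)))]
  have hQMP : ∀ x : E, ‖Q (M (P x))‖^2 ≤ 2 * ⟪M (P x), P x⟫ := by
    intro x
    have h1 := hB2 (M (P x))
    have h2 := hQn (M (P x))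
    have h3 := hyChat x
    linarith
  have hCQ : ∀ v : E, ‖Chalf v‖ ≤ ‖Q v‖ := by
    intro v
    apply aux_sqle (norm_nonneg _)
    have h1 := hCn v; have h2 := hQn v; have h3 := hBv v
    nlinarith [mul_nonneg hlamμ.le (sq_nonneg ‖v‖)]
  -- term 1
  have hterm1 : ‖Chalf (M (P ((C - Chat) (N θρ))))‖ ≤ 2 * ‖Qi ((Chat - C) (N θρ))‖ := by
    set x₁ := (C - Chat) (N θρ) with hx1
    have hx1Q : x₁ = Q (Qi x₁) := by
      have h := congrArg (fun T : E →L[ℝ] E => T x₁) hQQi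
      simpa only [ContinuousLinearMap.mul_apply, ContinuousLinearMap.one_apply] using h.symm
    have h1 := hQMP x₁
    have h2 : ⟪M (P x₁), P x₁⟫ = ⟪Q (M (P x₁)), Qi x₁⟫ := by
      rw [hPinner x₁ x₁]
      calc ⟪M (P x₁), x₁⟫ = ⟪M (P x₁), Q (Qi x₁)⟫ := by rw [← hx1Q]
        _ = ⟪Q (M (P x₁)), Qi x₁⟫ := (sy Q hQ (M (P x₁)) (Qi x₁)).symm
    have h3 : ⟪Q (M (P x₁)), Qi x₁⟫ ≤ ‖Q (M (P x₁))‖ * ‖Qi x₁‖ := real_inner_le_norm _ _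
    have h4 : ‖Q (M (P x₁))‖ ≤ 2 * ‖Qi x₁‖ := by
      apply aux_div (norm_nonneg _) (by positivity)
      calc ‖Q (M (P x₁))‖^2 ≤ 2 * ⟪M (P x₁), P x₁⟫ := h1
        _ = 2 * ⟪Q (M (P x₁)), Qi x₁⟫ := by rw [h2]
        _ ≤ 2 * (‖Q (M (P x₁))‖ * ‖Qi x₁‖) := by linarith
        _ = (2 * ‖Qi x₁‖) * ‖Q (M (P x₁))‖ := by ring
    have h5 : ‖Qi x₁‖ = ‖Qi ((Chat - C) (N θρ))‖ := by
      have h6 : x₁ = -((Chat - C) (N θρ)) := by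
        simp [hx1, ContinuousLinearMap.sub_apply, neg_sub]
      rw [h6, map_neg, norm_neg]
    calc ‖Chalf (M (P x₁))‖ ≤ ‖Q (M (P x₁))‖ := hCQ _
      _ ≤ 2 * ‖Qi x₁‖ := h4
      _ = 2 * ‖Qi ((Chat - C) (N θρ))‖ := by rw [h5]
  -- s facts
  set K := ‖Chalf.comp J‖ with hK
  clear_value K
  set s : E := J (N θρ) with hs
  clear_value s
  have hKnn : (0:ℝ) ≤ K := by rw [hK]; exact norm_nonneg _
  have hJJ : J * J = J := by
    rw [hJdef]
    simp only [sub_mul, mul_sub, one_mul, mul_one, hPP]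
    abel
  have hJsa : IsSelfAdjoint J := by
    rw [hJdef]; exact (IsSelfAdjoint.one (R := E →L[ℝ] E)).sub hP
  have hJv : ∀ z : E, J (J z) = J z := by
    intro z
    have h := congrArg (fun T : E →L[ℝ] E => T z) hJJ
    simpa only [ContinuousLinearMap.mul_apply] using h
  have hJcon : ∀ z : E, ‖J z‖ ≤ ‖z‖ := by
    intro z
    apply aux_div (norm_nonneg _) (norm_nonneg _)
    have h1 : ⟪J z, J z⟫ = ⟪z, J (J z)⟫ := sy J hJsa z (J z)
    rw [← real_inner_self_eq_norm_sq, h1, hJv]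
    calc ⟪z, J z⟫ ≤ ‖z‖ * ‖J z‖ := real_inner_le_norm _ _
      _ = ‖z‖ * ‖J z‖ := rfl
  have hCt : ∀ t : E, ‖C t‖ ≤ ‖B t‖ := by
    intro t
    apply aux_sqle (norm_nonneg _)
    rw [hBapp t, norm_add_sq_real]
    have h2 : ⟪C t, L • t⟫ = L * ⟪t, C t⟫ := by
      rw [real_inner_smul_right, real_inner_comm]
    nlinarith [hCpos t, hlamμ.le, sq_nonneg ‖L • t‖, mul_nonneg hlamμ.le (hCpos t)]
  have hBNw : ∀ z : E, B (N z) = z := by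
    intro z
    have h := congrArg (fun T : E →L[ℝ] E => T z) hBN
    simpa only [ContinuousLinearMap.mul_apply, ContinuousLinearMap.one_apply] using h
  have hNtheta : N θρ = C (N w) := by
    rw [← hw]
    have h := congrArg (fun T : E →L[ℝ] E => T w) hNC
    simp only [ContinuousLinearMap.mul_apply] at h
    exact h.symm
  have hNw_le : ‖N θρ‖ ≤ ‖w‖ := by
    rw [hNtheta]
    calc ‖C (N w)‖ ≤ ‖B (N w)‖ := hCt _
      _ = ‖w‖ := by rw [hBNw w]
  have hChalfs : ‖Chalf s‖ ≤ K * ‖w‖ := by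
    have h1 : Chalf s = (Chalf.comp J) (J (N θρ)) := by
      rw [hs]
      simp only [ContinuousLinearMap.comp_apply, hJv]
    rw [h1]
    calc ‖(Chalf.comp J) (J (N θρ))‖ ≤ K * ‖J (N θρ)‖ := by rw [hK]; exact ContinuousLinearMap.le_opNorm _ _
      _ ≤ K * ‖N θρ‖ := mul_le_mul_of_nonneg_left (hJcon _) hKnn
      _ ≤ K * ‖w‖ := mul_le_mul_of_nonneg_left hNw_le hKnn
  have hJC_norm : ‖J * Chalf‖ = K := by
    have h : J * Chalf = star (Chalf * J) := by rw [star_mul, hJsa.star_eq, hChalf.star_eq]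
    rw [h, ContinuousLinearMap.star_eq_adjoint, hK]
    exact ContinuousLinearMap.adjoint.norm_map _
  have hNCw2 : N θρ = Chalf (N (Chalf w)) := by
    rw [hNtheta]
    have hop : C * N = Chalf * (N * Chalf) := by
      calc C * N = Chalf * (Chalf * N) := by rw [← hCC, mul_assoc]
        _ = Chalf * (N * Chalf) := by rw [hChalfN]
    have h := congrArg (fun T : E →L[ℝ] E => T w) hop
    simp only [ContinuousLinearMap.mul_apply] at h
    exact h
  have hsr : s = (J * Chalf) (N (Chalf w)) := by
    rw [hs, hNCw2]; rfl
  have hLr : L * ‖N (Chalf w)‖^2 ≤ 1/4 * ‖w‖^2 := by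
    have hr : N (Chalf w) = Chalf (N w) := by
      have h := congrArg (fun T : E →L[ℝ] E => T w) hChalfN
      simp only [ContinuousLinearMap.mul_apply] at h
      exact h.symm
    rw [hr]
    have h1 : ‖Chalf (N w)‖^2 = ⟪N w, C (N w)⟫ := (hCn (N w)).symm
    have h2 : ‖w‖^2 = ‖B (N w)‖^2 := by rw [hBNw w]
    have h3 : ‖B (N w)‖^2 = ‖C (N w)‖^2 + 2 * (L * ⟪N w, C (N w)⟫) + L^2 * ‖N w‖^2 := by
      rw [hBapp (N w), norm_add_sq_real, real_inner_smul_right, real_inner_comm,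
        norm_smul, Real.norm_eq_abs, abs_of_pos hlamμ]
      ring
    have h4 : ⟪N w, C (N w)⟫ ≤ ‖N w‖ * ‖C (N w)‖ := real_inner_le_norm _ _
    have h5 := hCpos (N w)
    rw [h1, h2, h3]
    nlinarith [sq_nonneg (‖C (N w)‖ - L * ‖N w‖), mul_le_mul_of_nonneg_left h4 hlamμ.le, hlamμ]
  have hLs : L * ‖s‖^2 ≤ 1/4 * K^2 * ‖w‖^2 := by
    have h1 : ‖s‖ ≤ K * ‖N (Chalf w)‖ := by
      rw [hsr]
      calc ‖(J * Chalf) (N (Chalf w))‖ ≤ ‖J * Chalf‖ * ‖N (Chalf w)‖ :=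
            ContinuousLinearMap.le_opNorm _ _
        _ = K * ‖N (Chalf w)‖ := by rw [hJC_norm]
    have h2 : ‖s‖^2 ≤ K^2 * ‖N (Chalf w)‖^2 := by
      nlinarith [norm_nonneg s, norm_nonneg (N (Chalf w)), hKnn]
    calc L * ‖s‖^2 ≤ L * (K^2 * ‖N (Chalf w)‖^2) :=
          mul_le_mul_of_nonneg_left h2 hlamμ.le
      _ = K^2 * (L * ‖N (Chalf w)‖^2) := by ring
      _ ≤ K^2 * (1/4 * ‖w‖^2) := mul_le_mul_of_nonneg_left hLr (by positivity)
      _ = 1/4 * K^2 * ‖w‖^2 := by ring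
  have hQs : ‖Q s‖^2 ≤ 5/4 * K^2 * ‖w‖^2 := by
    have h1 := hQn s
    have h2 := hBv s
    have h3 := hCn s
    have h4 : ‖Chalf s‖^2 ≤ K^2 * ‖w‖^2 := by
      nlinarith [hChalfs, norm_nonneg (Chalf s), hKnn, norm_nonneg w,
        mul_nonneg hKnn (norm_nonneg w)]
    linarith [hLs]
  -- term 2
  have hterm2 : ‖Chalf (M (P (Chat s)))‖ ≤ 2 * K * ‖w‖ := by
    have hg : ⟪s, Chat s⟫ ≤ 13/8 * K^2 * ‖w‖^2 := by
      have h1 : ⟪s, Chat s⟫ = ⟪s, C s⟫ + ⟪s, (Chat - C) s⟫ := by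
        rw [ContinuousLinearMap.sub_apply, inner_sub_right]; ring
      have h2 := (abs_le.mp (hDbound s)).2
      have h3 := hCn s
      have h4 : ‖Chalf s‖^2 ≤ K^2 * ‖w‖^2 := by
        nlinarith [hChalfs, norm_nonneg (Chalf s), hKnn, norm_nonneg w,
          mul_nonneg hKnn (norm_nonneg w)]
      nlinarith [hQs]
    have hgpos : 0 ≤ ⟪s, Chat s⟫ := hChatPos s
    have hc_eq : ⟪M (P (Chat s)), Chat s⟫
        = ⟪M (P (Chat s)), Chat (M (P (Chat s)))⟫ + L * ‖M (P (Chat s))‖^2 := by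
      rw [← hPinner (Chat s) (Chat s)]
      exact hyChat (Chat s)
    have hcpos : 0 ≤ ⟪M (P (Chat s)), Chat s⟫ := by
      rw [hc_eq]
      have := hChatPos (M (P (Chat s)))
      nlinarith [mul_nonneg hlamμ.le (sq_nonneg ‖M (P (Chat s))‖)]
    have hCS := aux_cs Chat hChat hChatPos (M (P (Chat s))) s
    have hyle : ⟪M (P (Chat s)), Chat (M (P (Chat s)))⟫ ≤ ⟪M (P (Chat s)), Chat s⟫ := by
      rw [hc_eq]
      nlinarith [mul_nonneg hlamμ.le (sq_nonneg ‖M (P (Chat s))‖)]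
    have hcg : ⟪M (P (Chat s)), Chat s⟫ ≤ ⟪s, Chat s⟫ := by
      have h1 : ⟪M (P (Chat s)), Chat s⟫^2 ≤ ⟪M (P (Chat s)), Chat s⟫ * ⟪s, Chat s⟫ :=
        le_trans hCS (mul_le_mul_of_nonneg_right hyle hgpos)
      nlinarith [hcpos, hgpos]
    have h2 := hQMP (Chat s)
    have h3 : ⟪M (P (Chat s)), P (Chat s)⟫ = ⟪M (P (Chat s)), Chat s⟫ :=
      hPinner (Chat s) (Chat s)
    have h4 : ‖Chalf (M (P (Chat s)))‖^2 ≤ (2 * K * ‖w‖)^2 := by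
      have h5 := hCQ (M (P (Chat s)))
      have h6 : ‖Chalf (M (P (Chat s)))‖^2 ≤ ‖Q (M (P (Chat s)))‖^2 := by
        nlinarith [norm_nonneg (Chalf (M (P (Chat s)))), norm_nonneg (Q (M (P (Chat s))))]
      nlinarith [hg, hcg, hKnn, norm_nonneg w, sq_nonneg (K * ‖w‖)]
    exact aux_sqle (by positivity) h4
  -- final assembly
  have hSC : ∀ v : E, ‖Shalf v‖ ≤ ‖Chalf v‖ := by
    intro v
    apply aux_sqle (norm_nonneg _)
    rw [← hSn v, ← hCn v]
    exact hSigC v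
  have hsplit : P (M (P θρ)) - N θρ
      = M (P ((C - Chat) (N θρ))) + M (P (Chat s)) - s := by
    rw [hPMP θρ]
    exact hvec
  rw [hsplit]
  calc ‖Shalf (M (P ((C - Chat) (N θρ))) + M (P (Chat s)) - s)‖
      ≤ ‖Chalf (M (P ((C - Chat) (N θρ))) + M (P (Chat s)) - s)‖ := hSC _
    _ = ‖Chalf (M (P ((C - Chat) (N θρ)))) + Chalf (M (P (Chat s))) - Chalf s‖ := by
        rw [map_sub, map_add]
    _ ≤ ‖Chalf (M (P ((C - Chat) (N θρ)))) + Chalf (M (P (Chat s)))‖ + ‖Chalf s‖ :=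
        norm_sub_le _ _
    _ ≤ ‖Chalf (M (P ((C - Chat) (N θρ))))‖ + ‖Chalf (M (P (Chat s)))‖ + ‖Chalf s‖ := by
        have := norm_add_le (Chalf (M (P ((C - Chat) (N θρ))))) (Chalf (M (P (Chat s))))
        linarith
    _ ≤ 3 * K * ‖w‖ + 2 * ‖Qi ((Chat - C) (N θρ))‖ := by
        linarith [hterm1, hterm2, hChalfs]
end
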